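/- arXiv:2012.00755 — 8 statements merged into one kernel-verified Lean document; each statement's English description precedes it below -/
import Mathlib

section
/- For the two-agent one-dimensional HK system with |x_{1,0}-x_{2,0}|=1 and for any t̄∈[0,∞), the function equal to the constant initial datum on [0,t̄] and satisfying x_1(t)-x_2(t)=e^{-2(t-t̄)}(x_{1,0}-x_{2,0}), x_1(t)+x_2(t)=x_{1,0}+x_{2,0} for t≥t̄ is a Caratheodory solution, i.e. it is absolutely continuous and satisfies ẋ_1=χ_{|x_1-x_2|<1}(x_2-x_1), ẋ_2=χ_{|x_1-x_2|<1}(x_1-x_2) for almost every t≥0. -/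
open Real Set MeasureTheory

/-!
Both agents have the form `(a + b)/2 ± ((a - b)/2) e(t)` with `e(t) = exp(-2 max(t - tb, 0))`,
so, as `|a - b| = 1`, the system reduces to the scalar equation `ė = -2 χ_{e < 1} e` for the
gap `e = |x₁ - x₂|`. Off the switching time `tb` it holds classically: before `tb` the gap is
`1`, so the indicator vanishes and `e` is constant; after `tb` the gap is below `1` and decays
exponentially. Lipschitz continuity comes from `exp` being `1`-Lipschitz on `(-∞, 0]`.
-/

noncomputable def hkGap (tb t : ℝ) : ℝ := exp (-2 * max (t - tb) 0)

lemma hkGap_pos (tb t : ℝ) : 0 < hkGap tb t := exp_pos _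

lemma hkGap_of_le {tb t : ℝ} (h : t ≤ tb) : hkGap tb t = 1 := by
  simp [hkGap, max_eq_right (sub_nonpos.2 h)]

lemma hkGap_eq_of_lt {tb t : ℝ} (h : tb < t) : hkGap tb t = exp (-2 * (t - tb)) := by
  rw [hkGap, max_eq_left (sub_nonneg.2 h.le)]

lemma hkGap_lt_one {tb t : ℝ} (h : tb < t) : hkGap tb t < 1 := by
  rw [hkGap_eq_of_lt h, Real.exp_lt_one_iff]
  linarith

lemma lipschitzOnWith_exp_Iic_zero : LipschitzOnWith 1 exp (Iic 0) :=
  (convex_Iic 0).lipschitzOnWith_of_nnnorm_hasDerivWithin_le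
    (fun x _ => (hasDerivAt_exp x).hasDerivWithinAt) fun x hx => by
      rw [← NNReal.coe_le_coe, coe_nnnorm, norm_of_nonneg (exp_pos x).le]
      simpa using exp_le_one_iff.2 hx

lemma lipschitzWith_hkGap (tb : ℝ) : LipschitzWith 2 (hkGap tb) := by
  have hexponent : LipschitzWith 2 fun t : ℝ => -2 * max (t - tb) 0 :=
    LipschitzWith.of_dist_le_mul fun s t => by
      simp only [Real.dist_eq, ← mul_sub, abs_mul, NNReal.coe_ofNat]
      norm_num
      simpa using abs_max_sub_max_le_abs (s - tb) (t - tb) 0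
  have hmaps : MapsTo (fun t : ℝ => -2 * max (t - tb) 0) univ (Iic 0) := fun t _ => by
    simp only [mem_Iic]
    nlinarith [le_max_right (t - tb) 0]
  have h := lipschitzOnWith_exp_Iic_zero.comp hexponent.lipschitzOnWith hmaps
  rw [one_mul, lipschitzOnWith_univ] at h
  exact h

lemma lipschitzWith_const_add_mul_hkGap (tb m c : ℝ) :
    LipschitzWith (‖c‖₊ * 2) fun t => m + c * hkGap tb t := by
  have h := (isometry_add_left m).lipschitz.comp
    ((lipschitzWith_smul c).comp (lipschitzWith_hkGap tb))
  rw [one_mul] at h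
  exact h

lemma hasDerivAt_hkGap {tb t : ℝ} (ht : t ≠ tb) :
    HasDerivAt (hkGap tb)
      ((if hkGap tb t < 1 then (1 : ℝ) else 0) * (-2 * hkGap tb t)) t := by
  rcases ht.lt_or_gt with hlt | hgt
  · rw [hkGap_of_le hlt.le]
    simp only [lt_irrefl, if_false, zero_mul]
    refine (hasDerivAt_const t (1 : ℝ)).congr_of_eventuallyEq ?_
    filter_upwards [Iio_mem_nhds hlt] with s hs using hkGap_of_le (le_of_lt hs)
  · rw [if_pos (hkGap_lt_one hgt), one_mul, hkGap_eq_of_lt hgt]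
    have hlin : HasDerivAt (fun s : ℝ => -2 * (s - tb)) (-2) t := by
      simpa using ((hasDerivAt_id t).sub_const tb).const_mul (-2)
    have hexp : HasDerivAt (fun s => exp (-2 * (s - tb))) (-2 * exp (-2 * (t - tb))) t := by
      simpa [mul_comm] using hlin.exp
    refine hexp.congr_of_eventuallyEq ?_
    filter_upwards [Ioi_mem_nhds hgt] with s hs using hkGap_eq_of_lt hs

lemma ae_hasDerivAt_hkGap (tb : ℝ) : ∀ᵐ t, HasDerivAt (hkGap tb)
      ((if hkGap tb t < 1 then (1 : ℝ) else 0) * (-2 * hkGap tb t)) t := by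
  filter_upwards [(countable_singleton tb).ae_notMem volume] with t ht
  exact hasDerivAt_hkGap ht

theorem stmt_1_general (a b : ℝ) (hab : |a - b| = 1) (tb : ℝ)
    (x1 x2 : ℝ → ℝ)
    (hx1 : ∀ t, x1 t = if t ≤ tb then a
      else ((a + b) + Real.exp (-2 * (t - tb)) * (a - b)) / 2)
    (hx2 : ∀ t, x2 t = if t ≤ tb then b
      else ((a + b) - Real.exp (-2 * (t - tb)) * (a - b)) / 2) :
    (∃ C : NNReal, LipschitzWith C x1 ∧ LipschitzWith C x2) ∧
    (∀ᵐ t ∂(volume.restrict (Set.Ici (0:ℝ))),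
      HasDerivAt x1 ((if |x1 t - x2 t| < 1 then (1:ℝ) else 0) * (x2 t - x1 t)) t ∧
      HasDerivAt x2 ((if |x1 t - x2 t| < 1 then (1:ℝ) else 0) * (x1 t - x2 t)) t) := by
  set c := (a - b) / 2
  obtain rfl : x1 = fun t => (a + b) / 2 + c * hkGap tb t := funext fun t => by
    rcases le_or_gt t tb with ht | ht
    · rw [hx1, if_pos ht, hkGap_of_le ht]; ring
    · rw [hx1, if_neg ht.not_ge, hkGap_eq_of_lt ht]; ring
  obtain rfl : x2 = fun t => (a + b) / 2 + -c * hkGap tb t := funext fun t => by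
    rcases le_or_gt t tb with ht | ht
    · rw [hx2, if_pos ht, hkGap_of_le ht]; ring
    · rw [hx2, if_neg ht.not_ge, hkGap_eq_of_lt ht]; ring
  refine ⟨⟨‖c‖₊ * 2, lipschitzWith_const_add_mul_hkGap tb _ c, by
    simpa using lipschitzWith_const_add_mul_hkGap tb ((a + b) / 2) (-c)⟩, ?_⟩
  filter_upwards [ae_restrict_of_ae (ae_hasDerivAt_hkGap tb)] with t hderiv
  have hgap : |((a + b) / 2 + c * hkGap tb t) - ((a + b) / 2 + -c * hkGap tb t)|
      = hkGap tb t := by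
    rw [show (a + b) / 2 + c * hkGap tb t - ((a + b) / 2 + -c * hkGap tb t)
      = (a - b) * hkGap tb t by ring, abs_mul, hab, one_mul, abs_of_pos (hkGap_pos tb t)]
  rw [hgap]
  constructor
  · exact ((hderiv.const_mul c).const_add _).congr_deriv (by ring)
  · exact ((hderiv.const_mul (-c)).const_add _).congr_deriv (by ring)

/-- For the two-agent 1D HK system with `|x₁₀ - x₂₀| = 1` and any `t̄ ∈ [0,∞)`, the
function which is constant on `[0, t̄]` and then converges exponentially
(`x₁ - x₂ = e^{-2(t - t̄)}(x₁₀ - x₂₀)`, `x₁ + x₂ = x₁₀ + x₂₀`) is a Caratheodory solution: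
it is absolutely continuous (indeed Lipschitz) and satisfies
`ẋ₁ = χ_{|x₁-x₂|<1}(x₂-x₁)`, `ẋ₂ = χ_{|x₁-x₂|<1}(x₁-x₂)` for almost every `t ≥ 0`. -/
theorem stmt_1 (a b : ℝ) (hab : |a - b| = 1) (tb : ℝ) (htb : 0 ≤ tb)
    (x1 x2 : ℝ → ℝ)
    (hx1 : ∀ t, x1 t = if t ≤ tb then a
      else ((a + b) + Real.exp (-2 * (t - tb)) * (a - b)) / 2)
    (hx2 : ∀ t, x2 t = if t ≤ tb then b
      else ((a + b) - Real.exp (-2 * (t - tb)) * (a - b)) / 2) :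
    (∃ C : NNReal, LipschitzWith C x1 ∧ LipschitzWith C x2) ∧
    (∀ᵐ t ∂(volume.restrict (Set.Ici (0:ℝ))),
      HasDerivAt x1 ((if |x1 t - x2 t| < 1 then (1:ℝ) else 0) * (x2 t - x1 t)) t ∧
      HasDerivAt x2 ((if |x1 t - x2 t| < 1 then (1:ℝ) else 0) * (x1 t - x2 t)) t) :=
  stmt_1_general a b hab tb x1 x2 hx1 hx2
end

section
/- For the two-agent one-dimensional HK system with |x_{1,0}-x_{2,0}|=1, the only classical solution (differentiable everywhere and satisfying the equation at every time) is the constant solution x(t)≡x(0). -/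
open Set

/-! The difference `d = x₁ - x₂` solves `d' = -2 χ_{|d|<1} d`. Suppose `|d s| ≥ 1` but `|d| < 1`
on a whole interval `(s, b)`. There the equation reads `d' = -2d`, so the right derivative of `d`
at `s` is the limit `-2 d s ≠ 0`, whereas at `s` the switch is off and the equation makes it `0`.
By continuous induction `|d| ≥ 1` throughout, so the switch never turns on and both agents stay
put. -/

theorem hasDerivWithinAt_Ici_of_hasDerivAt_of_continuousWithinAt {E : Type*}
    [NormedAddCommGroup E] [NormedSpace ℝ E] {f g : ℝ → E} {a b : ℝ} (hab : a < b)
    (hf : ContinuousWithinAt f (Ici a) a) (hfg : ∀ u ∈ Ioo a b, HasDerivAt f (g u) u)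
    (hg : ContinuousWithinAt g (Ioi a) a) : HasDerivWithinAt f (g a) (Ici a) a := by
  refine hasDerivWithinAt_Ici_of_tendsto_deriv
    (fun u hu => (hfg u hu).differentiableAt.differentiableWithinAt)
    (hf.mono (Ioo_subset_Ioi_self.trans Ioi_subset_Ici_self)) (Ioo_mem_nhdsGT hab) ?_
  refine hg.tendsto.congr' ?_
  filter_upwards [Ioo_mem_nhdsGT hab] with u hu
  exact (hfg u hu).deriv.symm

theorem constant_of_hasDerivWithinAt_Ici_zero {E : Type*} [NormedAddCommGroup E]
    [NormedSpace ℝ E] {f : ℝ → E} {a : ℝ}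
    (hf : ∀ t ≥ a, HasDerivWithinAt f 0 (Ici a) t) : ∀ t ≥ a, f t = f a := fun t ht =>
  constant_of_has_deriv_right_zero
    (fun u hu => (hf u hu.1).continuousWithinAt.mono Icc_subset_Ici_self)
    (fun u hu => (hf u hu.1).mono (Ici_subset_Ici.mpr hu.1)) t ⟨ht, le_rfl⟩

theorem le_abs_of_hasDerivWithinAt_ite_mul {y : ℝ → ℝ} {c r : ℝ} (hc : c ≠ 0) (hr : 0 < r)
    (hy : ∀ t ≥ (0:ℝ), HasDerivWithinAt y ((if |y t| < r then c else 0) * y t) (Ici 0) t)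
    (h0 : r ≤ |y 0|) : ∀ t ≥ (0:ℝ), r ≤ |y t| := by
  intro b hb
  have hcont : ContinuousOn y (Ici 0) := fun t ht => (hy t ht).continuousWithinAt
  refine IsClosed.mem_of_ge_of_forall_exists_gt (s := {t | r ≤ |y t|}) ?_ h0 hb ?_
  · rw [inter_comm]
    exact (continuous_abs.comp_continuousOn (hcont.mono Icc_subset_Ici_self))
      |>.preimage_isClosed_of_isClosed isClosed_Icc isClosed_Ici
  rintro s ⟨hs : r ≤ |y s|, hs0, hsb⟩
  by_contra hempty
  have hbelow : ∀ u ∈ Ioo s b, |y u| < r := fun u hu =>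
    not_le.mp fun h => hempty ⟨u, h, hu.1, hu.2.le⟩
  have hswitched_off : HasDerivWithinAt y 0 (Ici s) s := by
    simpa only [if_neg (not_lt.mpr hs), zero_mul] using (hy s hs0).mono (Ici_subset_Ici.mpr hs0)
  have hys_cont : ContinuousWithinAt y (Ici s) s := (hcont s hs0).mono (Ici_subset_Ici.mpr hs0)
  have hlinear : HasDerivWithinAt y (c * y s) (Ici s) s := by
    refine hasDerivWithinAt_Ici_of_hasDerivAt_of_continuousWithinAt (g := fun u => c * y u) hsb
      hys_cont (fun u hu => ?_) (continuousWithinAt_const.mul (hys_cont.mono Ioi_subset_Ici_self))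
    have hu0 : 0 < u := hs0.trans_lt hu.1
    simpa only [if_pos (hbelow u hu), one_mul] using (hy u hu0.le).hasDerivAt (Ici_mem_nhds hu0)
  have hys : y s ≠ 0 := abs_pos.mp (hr.trans_le hs)
  exact mul_ne_zero hc hys ((uniqueDiffWithinAt_Ici s).eq_deriv _ hlinear hswitched_off)

/-- For the two-agent 1D HK system with `|x₁(0) - x₂(0)| = 1`, the only classical solution
(differentiable and satisfying the equation at every time `t ≥ 0`, with one-sided derivatives
at `0`) is the constant one. -/
theorem stmt_2 (x1 x2 : ℝ → ℝ)
    (h0 : |x1 0 - x2 0| = 1)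
    (hsol : ∀ t ≥ (0:ℝ),
      HasDerivWithinAt x1 ((if |x1 t - x2 t| < 1 then (1:ℝ) else 0) * (x2 t - x1 t))
        (Set.Ici 0) t ∧
      HasDerivWithinAt x2 ((if |x1 t - x2 t| < 1 then (1:ℝ) else 0) * (x1 t - x2 t))
        (Set.Ici 0) t) :
    ∀ t ≥ (0:ℝ), x1 t = x1 0 ∧ x2 t = x2 0 := by
  have hdiff : ∀ t ≥ (0:ℝ), HasDerivWithinAt (fun u => x1 u - x2 u)
      ((if |x1 t - x2 t| < 1 then -2 else 0) * (x1 t - x2 t)) (Ici 0) t := fun t ht =>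
    ((hsol t ht).1.sub (hsol t ht).2).congr_deriv (by split_ifs <;> ring)
  have hapart : ∀ t ≥ (0:ℝ), ¬ |x1 t - x2 t| < 1 := fun t ht =>
    not_lt.mpr (le_abs_of_hasDerivWithinAt_ite_mul (by norm_num) one_pos hdiff h0.ge t ht)
  have hx1 := constant_of_hasDerivWithinAt_Ici_zero fun t ht => by
    simpa only [if_neg (hapart t ht), zero_mul] using (hsol t ht).1
  have hx2 := constant_of_hasDerivWithinAt_Ici_zero fun t ht => by
    simpa only [if_neg (hapart t ht), zero_mul] using (hsol t ht).2
  exact fun t ht => ⟨hx1 t ht, hx2 t ht⟩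
end

section
/- For the three-agent one-dimensional HK system, if a Caratheodory solution satisfies |x_2(t̄)-x_1(t̄)|<1 at some time t̄, then |x_2(t)-x_1(t)|<1 for all t≥t̄. -/
open Real Set MeasureTheory intervalIntegral

lemma primitive_aemeasurable (g : ℝ → ℝ) (C : ℝ) (hg : ∀ s, |g s| ≤ C) :
    AEMeasurable (fun t => if 0 ≤ t then ∫ s in (0:ℝ)..t, g s else 0) volume := by
  set B : Set ℝ := {t | 0 ≤ t ∧ IntervalIntegrable g volume 0 t} with hBdef
  have hB : B.OrdConnected := by
    constructor
    intro s hs t ht u hu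
    exact ⟨le_trans hs.1 hu.1, ht.2.mono_set (by
      rw [uIcc_of_le (le_trans hs.1 hu.1), uIcc_of_le (le_trans hs.1 (le_trans hu.1 hu.2))]
      exact Icc_subset_Icc le_rfl hu.2)⟩
  have hBm : MeasurableSet B := hB.measurableSet
  have hC0 : 0 ≤ C := le_trans (abs_nonneg _) (hg 0)
  have hlip : LipschitzOnWith C.toNNReal (fun t => ∫ s in (0:ℝ)..t, g s) B := by
    apply LipschitzOnWith.of_dist_le_mul
    intro s hs t ht
    wlog hst : t ≤ s generalizing s t
    · rw [dist_comm, dist_comm s t]; exact this t ht s hs (le_of_not_ge hst)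
    have h1 : IntervalIntegrable g volume 0 t := ht.2
    have h2 : IntervalIntegrable g volume t s := hs.2.mono_set (by
      rw [uIcc_of_le hst, uIcc_of_le (le_trans ht.1 hst)]
      exact Icc_subset_Icc ht.1 le_rfl)
    have hadd : (∫ u in (0:ℝ)..t, g u) + (∫ u in t..s, g u) = ∫ u in (0:ℝ)..s, g u :=
      integral_add_adjacent_intervals h1 h2
    have hb : ‖∫ u in t..s, g u‖ ≤ C * |s - t| := by
      apply intervalIntegral.norm_integral_le_of_norm_le_const
      intro x _; exact hg x
    rw [Real.dist_eq, Real.dist_eq]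
    calc |(∫ u in (0:ℝ)..s, g u) - ∫ u in (0:ℝ)..t, g u| = |∫ u in t..s, g u| := by
          rw [← hadd]; ring_nf
      _ ≤ C * |s - t| := hb
      _ = C.toNNReal * |s - t| := by rw [Real.coe_toNNReal C hC0]
  have heq : (fun t => if 0 ≤ t then ∫ s in (0:ℝ)..t, g s else 0)
      = B.indicator (fun t => ∫ s in (0:ℝ)..t, g s) := by
    funext t
    by_cases ht : t ∈ B
    · rw [Set.indicator_of_mem ht, if_pos ht.1]
    · rw [Set.indicator_of_notMem ht]
      by_cases h0 : 0 ≤ t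
      · rw [if_pos h0, intervalIntegral.integral_undef]
        intro h; exact ht ⟨h0, h⟩
      · rw [if_neg h0]
  rw [heq]
  exact (aemeasurable_indicator_iff hBm).2 (hlip.continuousOn.aemeasurable hBm)

lemma term_abs_le (a b : ℝ) (hab : |a| = |b|) :
    |(if |a| < 1 then (1:ℝ) else 0) * b| ≤ 1 := by
  split_ifs with h
  · rw [one_mul]; rw [hab] at h; exact h.le
  · simp

/-- For the three-agent 1D HK system (ordered agents), if a Caratheodory solution (in
integral form) satisfies `|x₂(t̄) - x₁(t̄)| < 1` at some time `t̄ ≥ 0`, then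
`|x₂(t) - x₁(t)| < 1` for all `t ≥ t̄`. -/
theorem stmt_7 (x1 x2 x3 : ℝ → ℝ)
    (horder : ∀ t ≥ (0:ℝ), x1 t ≤ x2 t ∧ x2 t ≤ x3 t)
    (hsol1 : ∀ t ≥ (0:ℝ), x1 t = x1 0 + ∫ s in (0:ℝ)..t,
      ((if |x1 s - x2 s| < 1 then (1:ℝ) else 0) * (x2 s - x1 s)
        + (if |x1 s - x3 s| < 1 then (1:ℝ) else 0) * (x3 s - x1 s)))
    (hsol2 : ∀ t ≥ (0:ℝ), x2 t = x2 0 + ∫ s in (0:ℝ)..t,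
      ((if |x1 s - x2 s| < 1 then (1:ℝ) else 0) * (x1 s - x2 s)
        + (if |x2 s - x3 s| < 1 then (1:ℝ) else 0) * (x3 s - x2 s)))
    (hsol3 : ∀ t ≥ (0:ℝ), x3 t = x3 0 + ∫ s in (0:ℝ)..t,
      ((if |x1 s - x3 s| < 1 then (1:ℝ) else 0) * (x1 s - x3 s)
        + (if |x2 s - x3 s| < 1 then (1:ℝ) else 0) * (x2 s - x3 s)))
    (tb : ℝ) (htb : 0 ≤ tb)
    (hlt : |x2 tb - x1 tb| < 1) :
    ∀ t ≥ tb, |x2 t - x1 t| < 1 := by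
  set g1 : ℝ → ℝ := fun s => (if |x1 s - x2 s| < 1 then (1:ℝ) else 0) * (x2 s - x1 s)
        + (if |x1 s - x3 s| < 1 then (1:ℝ) else 0) * (x3 s - x1 s) with hg1def
  set g2 : ℝ → ℝ := fun s => (if |x1 s - x2 s| < 1 then (1:ℝ) else 0) * (x1 s - x2 s)
        + (if |x2 s - x3 s| < 1 then (1:ℝ) else 0) * (x3 s - x2 s) with hg2def
  set g3 : ℝ → ℝ := fun s => (if |x1 s - x3 s| < 1 then (1:ℝ) else 0) * (x1 s - x3 s)
        + (if |x2 s - x3 s| < 1 then (1:ℝ) else 0) * (x2 s - x3 s) with hg3def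
  -- pointwise bounds
  have hb1 : ∀ s, |g1 s| ≤ 2 := by
    intro s
    have := term_abs_le (x1 s - x2 s) (x2 s - x1 s) (abs_sub_comm _ _)
    have := term_abs_le (x1 s - x3 s) (x3 s - x1 s) (abs_sub_comm _ _)
    calc |g1 s| ≤ _ + _ := abs_add_le _ _
      _ ≤ 1 + 1 := by gcongr
      _ = 2 := by norm_num
  have hb2 : ∀ s, |g2 s| ≤ 2 := by
    intro s
    have := term_abs_le (x1 s - x2 s) (x1 s - x2 s) rfl
    have := term_abs_le (x2 s - x3 s) (x3 s - x2 s) (abs_sub_comm _ _)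
    calc |g2 s| ≤ _ + _ := abs_add_le _ _
      _ ≤ 1 + 1 := by gcongr
      _ = 2 := by norm_num
  have hb3 : ∀ s, |g3 s| ≤ 2 := by
    intro s
    have := term_abs_le (x1 s - x3 s) (x1 s - x3 s) rfl
    have := term_abs_le (x2 s - x3 s) (x2 s - x3 s) rfl
    calc |g3 s| ≤ _ + _ := abs_add_le _ _
      _ ≤ 1 + 1 := by gcongr
      _ = 2 := by norm_num
  -- measurable representatives
  have hF1 := primitive_aemeasurable g1 2 hb1
  have hF2 := primitive_aemeasurable g2 2 hb2
  have hF3 := primitive_aemeasurable g3 2 hb3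
  have hX1 : AEMeasurable (fun t => x1 0 + (if 0 ≤ t then ∫ s in (0:ℝ)..t, g1 s else 0)) volume :=
    hF1.const_add _
  have hX2 : AEMeasurable (fun t => x2 0 + (if 0 ≤ t then ∫ s in (0:ℝ)..t, g2 s else 0)) volume :=
    hF2.const_add _
  have hX3 : AEMeasurable (fun t => x3 0 + (if 0 ≤ t then ∫ s in (0:ℝ)..t, g3 s else 0)) volume :=
    hF3.const_add _
  have hxX1 : ∀ t, 0 ≤ t → x1 t = x1 0 + (if 0 ≤ t then ∫ s in (0:ℝ)..t, g1 s else 0) := by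
    intro t ht; rw [if_pos ht]; exact hsol1 t ht
  have hxX2 : ∀ t, 0 ≤ t → x2 t = x2 0 + (if 0 ≤ t then ∫ s in (0:ℝ)..t, g2 s else 0) := by
    intro t ht; rw [if_pos ht]; exact hsol2 t ht
  have hxX3 : ∀ t, 0 ≤ t → x3 t = x3 0 + (if 0 ≤ t then ∫ s in (0:ℝ)..t, g3 s else 0) := by
    intro t ht; rw [if_pos ht]; exact hsol3 t ht
  set M1 := hX1.mk _ with hM1def
  set M2 := hX2.mk _ with hM2def
  set M3 := hX3.mk _ with hM3def
  have hM1m : Measurable M1 := hX1.measurable_mk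
  have hM2m : Measurable M2 := hX2.measurable_mk
  have hM3m : Measurable M3 := hX3.measurable_mk
  -- integrability
  have key : ∀ (g : ℝ → ℝ) (G : ℝ → ℝ), Measurable G → (∀ s, |g s| ≤ 2) →
      (∀ᵐ s ∂volume, 0 ≤ s → g s = G s) → ∀ t, 0 ≤ t → IntervalIntegrable g volume 0 t := by
    intro g G hGm hgb hae t ht
    rw [intervalIntegrable_iff_integrableOn_Ioc_of_le ht]
    have haes : AEStronglyMeasurable g (volume.restrict (Ioc 0 t)) := by
      refine (hGm.aestronglyMeasurable).congr ?_
      filter_upwards [ae_restrict_of_ae hae, ae_restrict_mem measurableSet_Ioc] with s h1 h2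
      exact (h1 h2.1.le).symm
    refine Integrable.mono' (integrable_const (2:ℝ)) haes ?_
    exact ae_of_all _ fun s => by simpa using hgb s
  have hs12 : MeasurableSet {s | |M1 s - M2 s| < 1} :=
    measurableSet_lt (hM1m.sub hM2m).abs measurable_const
  have hs13 : MeasurableSet {s | |M1 s - M3 s| < 1} :=
    measurableSet_lt (hM1m.sub hM3m).abs measurable_const
  have hs23 : MeasurableSet {s | |M2 s - M3 s| < 1} :=
    measurableSet_lt (hM2m.sub hM3m).abs measurable_const
  have hi12 : Measurable (fun s => if |M1 s - M2 s| < 1 then (1:ℝ) else 0) :=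
    Measurable.ite hs12 measurable_const measurable_const
  have hi13 : Measurable (fun s => if |M1 s - M3 s| < 1 then (1:ℝ) else 0) :=
    Measurable.ite hs13 measurable_const measurable_const
  have hi23 : Measurable (fun s => if |M2 s - M3 s| < 1 then (1:ℝ) else 0) :=
    Measurable.ite hs23 measurable_const measurable_const
  have hG1m : Measurable (fun s => (if |M1 s - M2 s| < 1 then (1:ℝ) else 0) * (M2 s - M1 s)
        + (if |M1 s - M3 s| < 1 then (1:ℝ) else 0) * (M3 s - M1 s)) :=
    (hi12.mul (hM2m.sub hM1m)).add (hi13.mul (hM3m.sub hM1m))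
  have hG2m : Measurable (fun s => (if |M1 s - M2 s| < 1 then (1:ℝ) else 0) * (M1 s - M2 s)
        + (if |M2 s - M3 s| < 1 then (1:ℝ) else 0) * (M3 s - M2 s)) :=
    (hi12.mul (hM1m.sub hM2m)).add (hi23.mul (hM3m.sub hM2m))
  have haeM : ∀ᵐ s ∂volume, 0 ≤ s → (x1 s = M1 s ∧ x2 s = M2 s ∧ x3 s = M3 s) := by
    filter_upwards [hX1.ae_eq_mk, hX2.ae_eq_mk, hX3.ae_eq_mk] with s e1 e2 e3 hs
    exact ⟨(hxX1 s hs).trans e1, (hxX2 s hs).trans e2, (hxX3 s hs).trans e3⟩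
  have hInt1 : ∀ t, 0 ≤ t → IntervalIntegrable g1 volume 0 t := by
    refine key g1 _ hG1m hb1 ?_
    filter_upwards [haeM] with s hs h0s
    obtain ⟨e1, e2, e3⟩ := hs h0s
    simp only [hg1def, e1, e2, e3]
  have hInt2 : ∀ t, 0 ≤ t → IntervalIntegrable g2 volume 0 t := by
    refine key g2 _ hG2m hb2 ?_
    filter_upwards [haeM] with s hs h0s
    obtain ⟨e1, e2, e3⟩ := hs h0s
    simp only [hg2def, e1, e2, e3]
  -- fundamental identity for d = x2 - x1
  have hkey : ∀ s t : ℝ, 0 ≤ s → s ≤ t →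
      x2 t - x1 t = (x2 s - x1 s) + ∫ u in s..t, (g2 u - g1 u) := by
    intro s t hs hst
    have hst1 : IntervalIntegrable g1 volume s t := (hInt1 t (hs.trans hst)).mono_set (by
      rw [uIcc_of_le hst, uIcc_of_le (hs.trans hst)]; exact Icc_subset_Icc hs le_rfl)
    have hst2 : IntervalIntegrable g2 volume s t := (hInt2 t (hs.trans hst)).mono_set (by
      rw [uIcc_of_le hst, uIcc_of_le (hs.trans hst)]; exact Icc_subset_Icc hs le_rfl)
    have hadd1 : (∫ u in (0:ℝ)..s, g1 u) + (∫ u in s..t, g1 u) = ∫ u in (0:ℝ)..t, g1 u :=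
      integral_add_adjacent_intervals (hInt1 s hs) hst1
    have hadd2 : (∫ u in (0:ℝ)..s, g2 u) + (∫ u in s..t, g2 u) = ∫ u in (0:ℝ)..t, g2 u :=
      integral_add_adjacent_intervals (hInt2 s hs) hst2
    have hsub : ∫ u in s..t, (g2 u - g1 u) = (∫ u in s..t, g2 u) - ∫ u in s..t, g1 u :=
      intervalIntegral.integral_sub hst2 hst1
    have e1t := hsol1 t (hs.trans hst); have e1s := hsol1 s hs
    have e2t := hsol2 t (hs.trans hst); have e2s := hsol2 s hs
    rw [hsub, e1t, e1s, e2t, e2s]; linarith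
  -- Lipschitz bound for d
  have hdlip : ∀ s t : ℝ, 0 ≤ s → s ≤ t →
      |(x2 t - x1 t) - (x2 s - x1 s)| ≤ 4 * (t - s) := by
    intro s t hs hst
    rw [hkey s t hs hst]
    have : ‖∫ u in s..t, (g2 u - g1 u)‖ ≤ 4 * |t - s| := by
      apply intervalIntegral.norm_integral_le_of_norm_le_const
      intro x _
      have := hb1 x; have := hb2 x
      simp only [Real.norm_eq_abs]
      calc |g2 x - g1 x| ≤ |g2 x| + |g1 x| := abs_sub _ _
        _ ≤ 4 := by linarith
    rw [abs_of_nonneg (by linarith : (0:ℝ) ≤ t - s)] at this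
    simpa using this
  -- derivative bound when d < 1
  have hf : ∀ s : ℝ, 0 ≤ s → x2 s - x1 s < 1 → g2 s - g1 s ≤ -2 * (x2 s - x1 s) + 1 := by
    intro s hs hd
    obtain ⟨h12, h23⟩ := horder s hs
    have habs12 : |x1 s - x2 s| < 1 := by rw [abs_sub_comm, abs_of_nonneg (by linarith)]; exact hd
    have t23 : (if |x2 s - x3 s| < 1 then (1:ℝ) else 0) * (x3 s - x2 s) ≤ 1 := by
      split_ifs with h
      · rw [abs_sub_comm, abs_of_nonneg (by linarith)] at h; linarith
      · norm_num
    have t13 : 0 ≤ (if |x1 s - x3 s| < 1 then (1:ℝ) else 0) * (x3 s - x1 s) := by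
      split_ifs with h
      · nlinarith
      · norm_num
    simp only [hg1def, hg2def, if_pos habs12]
    linarith
  -- nonnegativity of d for t ≥ 0
  have hd0 : ∀ t, 0 ≤ t → 0 ≤ x2 t - x1 t := fun t ht => by linarith [(horder t ht).1]
  -- reduce to d < 1
  have main : ∀ t ≥ tb, x2 t - x1 t < 1 := by
    by_contra hcon
    push_neg at hcon
    obtain ⟨t, htt, ht1⟩ := hcon
    set S : Set ℝ := Ici tb ∩ (fun u => x2 u - x1 u) ⁻¹' (Ici 1) with hSdef
    have hcont : ContinuousOn (fun u => x2 u - x1 u) (Ici tb) := by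
      have hlip : LipschitzOnWith (Real.toNNReal 4) (fun u => x2 u - x1 u) (Ici tb) := by
        apply LipschitzOnWith.of_dist_le_mul
        intro p hp q hq
        wlog hpq : q ≤ p generalizing p q
        · rw [dist_comm, dist_comm p q]; exact this q hq p hp (le_of_not_ge hpq)
        rw [Real.dist_eq, Real.dist_eq, abs_of_nonneg (by linarith : (0:ℝ) ≤ p - q)]
        have := hdlip q p (le_trans htb hq) hpq
        calc |(x2 p - x1 p) - (x2 q - x1 q)| ≤ 4 * (p - q) := this
          _ = (Real.toNNReal 4) * (p - q) := by rw [Real.coe_toNNReal 4 (by norm_num)]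
      exact hlip.continuousOn
    have hSclosed : IsClosed S :=
      hcont.preimage_isClosed_of_isClosed isClosed_Ici isClosed_Ici
    have hSne : S.Nonempty := ⟨t, htt, ht1⟩
    have hSbdd : BddBelow S := ⟨tb, fun y hy => hy.1⟩
    set T := sInf S with hTdef
    have hTS : T ∈ S := hSclosed.csInf_mem hSne hSbdd
    have hTtb : tb ≤ T := hTS.1
    have hdT : 1 ≤ x2 T - x1 T := hTS.2
    have hdtb : x2 tb - x1 tb < 1 := lt_of_abs_lt hlt
    have hTne : tb < T := lt_of_le_of_ne hTtb (by intro h; rw [← h] at hdT; linarith)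
    have hbefore : ∀ u, tb ≤ u → u < T → x2 u - x1 u < 1 := by
      intro u hu huT
      by_contra h
      push_neg at h
      exact absurd (csInf_le hSbdd ⟨hu, h⟩) (not_le.mpr huT)
    set t0 := max tb (T - 1/16) with ht0def
    have ht0T : t0 < T := max_lt hTne (by linarith)
    have ht0tb : tb ≤ t0 := le_max_left _ _
    have ht00 : 0 ≤ t0 := le_trans htb ht0tb
    have hint : ∫ u in t0..T, (g2 u - g1 u) ≤ 0 := by
      rw [intervalIntegral.integral_of_le ht0T.le, MeasureTheory.integral_Ioc_eq_integral_Ioo]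
      apply MeasureTheory.integral_nonpos_of_ae
      apply ae_restrict_of_forall_mem measurableSet_Ioo
      intro u hu
      have hu0 : 0 ≤ u := le_trans ht00 hu.1.le
      have hutb : tb ≤ u := le_trans ht0tb hu.1.le
      have hdu1 : x2 u - x1 u < 1 := hbefore u hutb hu.2
      have hunear : T - 1/16 ≤ u := le_trans (le_max_right _ _) hu.1.le
      have hclose := hdlip u T hu0 hu.2.le
      have hdub : 3/4 ≤ x2 u - x1 u := by
        have h1 : (x2 T - x1 T) - (x2 u - x1 u) ≤ 4 * (T - u) := (abs_le.mp hclose).2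
        have : T - u ≤ 1/16 := by linarith
        linarith
      have := hf u hu0 hdu1
      simp only [Pi.zero_apply]
      linarith
    have hid := hkey t0 T ht00 ht0T.le
    have hdt0 : x2 t0 - x1 t0 < 1 := hbefore t0 ht0tb ht0T
    linarith
  intro t ht
  rw [abs_of_nonneg (hd0 t (le_trans htb ht))]
  exact main t ht
end

section
/- For the three-agent one-dimensional HK system, if a Caratheodory solution satisfies |x_2(t̄)-x_1(t̄)|>1 at some time t̄ (with x_1≤x_2≤x_3), then x_1(t)=x_1(t̄) for all t≥t̄, i.e. the leftmost agent is frozen. -/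
/-!
While `x₂ - x₁ > 1`, agent 1 sees neither neighbour (as `x₃ - x₁ ≥ x₂ - x₁`), so its drift
vanishes, and agent 2 is attracted only by agent 3, which lies to its right. So the gap `x₂ - x₁`
cannot shrink while it exceeds 1; looking at the first time it would reach 1 shows that it stays
above 1 forever, and agent 1 never moves.

The integral equations do not presuppose that the drifts are integrable (a non-integrable
integrand has integral `0`), so one first checks that the trajectories are measurable; the
bounded drifts are then integrable on bounded intervals.
-/

open Set MeasureTheory

noncomputable def hkWeight (y : ℝ) : ℝ := if |y| < 1 then 1 else 0

lemma measurable_hkWeight : Measurable hkWeight :=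
  Measurable.ite (measurableSet_lt continuous_abs.measurable measurable_const)
    measurable_const measurable_const

lemma abs_hkWeight_mul_le {a b : ℝ} (h : |b| = |a|) : |hkWeight a * b| ≤ 1 := by
  unfold hkWeight
  split_ifs with ha
  · rw [one_mul, h]; exact ha.le
  · simp

lemma abs_hkWeight_mul_add_le {a b c d : ℝ} (hab : |b| = |a|) (hcd : |d| = |c|) :
    |hkWeight a * b + hkWeight c * d| ≤ 2 := by
  linarith [abs_add_le (hkWeight a * b) (hkWeight c * d), abs_hkWeight_mul_le hab,
    abs_hkWeight_mul_le hcd]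

lemma integrableOn_hkWeight_mul_add {α : Type*} [MeasurableSpace α] {μ : Measure α}
    {s t : Set α} {a b c d : α → ℝ} (hst : s ⊆ t) (hs : μ s < ⊤)
    (ha : AEMeasurable a (μ.restrict t)) (hb : AEMeasurable b (μ.restrict t))
    (hc : AEMeasurable c (μ.restrict t)) (hd : AEMeasurable d (μ.restrict t))
    (hab : ∀ x, |b x| = |a x|) (hcd : ∀ x, |d x| = |c x|) :
    IntegrableOn (fun x => hkWeight (a x) * b x + hkWeight (c x) * d x) s μ :=
  IntegrableOn.of_bound hs
    ((((measurable_hkWeight.comp_aemeasurable ha).mul hb).add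
      ((measurable_hkWeight.comp_aemeasurable hc).mul hd)).aestronglyMeasurable.mono_measure
        (Measure.restrict_mono hst le_rfl)) 2
    (ae_of_all _ fun x => abs_hkWeight_mul_add_le (hab x) (hcd x))

lemma hk_drift_left_eq_zero {a b c : ℝ} (hbc : b ≤ c) (hgap : 1 < b - a) :
    hkWeight (a - b) * (b - a) + hkWeight (a - c) * (c - a) = 0 := by
  have hab : ¬ |a - b| < 1 := by rw [abs_sub_comm, abs_of_pos (by linarith)]; linarith
  have hac : ¬ |a - c| < 1 := by rw [abs_sub_comm, abs_of_pos (by linarith)]; linarith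
  simp [hkWeight, hab, hac]

lemma hk_drift_middle_nonneg {a b c : ℝ} (hbc : b ≤ c) (hgap : 1 < b - a) :
    0 ≤ hkWeight (a - b) * (a - b) + hkWeight (b - c) * (c - b) := by
  have hab : ¬ |a - b| < 1 := by rw [abs_sub_comm, abs_of_pos (by linarith)]; linarith
  unfold hkWeight
  split_ifs <;> linarith

lemma forall_lt_on_Icc_of_continuousOn {g : ℝ → ℝ} {a b c : ℝ} (hg : ContinuousOn g (Icc a b))
    (ha : c < g a) (hle : ∀ s ∈ Icc a b, (∀ u ∈ Ioo a s, c < g u) → g a ≤ g s) :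
    ∀ s ∈ Icc a b, c < g s := by
  by_contra! h
  obtain ⟨s, hs, hgs⟩ := h
  set S := Icc a b ∩ g ⁻¹' Iic c
  have hbdd : BddBelow S := ⟨a, fun u hu => hu.1.1⟩
  -- the first time `g` drops to `c`
  obtain ⟨hσ, hσc⟩ : sInf S ∈ S :=
    (hg.preimage_isClosed_of_isClosed isClosed_Icc isClosed_Iic).csInf_mem ⟨s, hs, hgs⟩ hbdd
  have hbefore : ∀ u ∈ Ioo a (sInf S), c < g u := fun u hu =>
    not_le.1 fun hgu => (csInf_le hbdd ⟨⟨hu.1.le, hu.2.le.trans hσ.2⟩, hgu⟩).not_gt hu.2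
  linarith [hle _ hσ hbefore, show g (sInf S) ≤ c from hσc]

section IntegralEquation

variable {x f : ℝ → ℝ} {C a b : ℝ}

lemma sub_eq_intervalIntegral_of_eq_add_integral
    (hx : ∀ t ≥ (0:ℝ), x t = x 0 + ∫ s in (0:ℝ)..t, f s) (ha : 0 ≤ a) (hb : 0 ≤ b)
    (hfa : IntegrableOn f (Ioc 0 a)) (hfb : IntegrableOn f (Ioc 0 b)) :
    x b - x a = ∫ s in a..b, f s := by
  rw [hx b hb, hx a ha, ← intervalIntegral.integral_interval_sub_left
    ((intervalIntegrable_iff_integrableOn_Ioc_of_le hb).2 hfb)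
    ((intervalIntegrable_iff_integrableOn_Ioc_of_le ha).2 hfa)]
  ring

lemma lipschitzOnWith_of_eq_add_integral (hx : ∀ t ≥ (0:ℝ), x t = x 0 + ∫ s in (0:ℝ)..t, f s)
    (hf : ∀ s, |f s| ≤ C) :
    LipschitzOnWith C.toNNReal x {u | 0 ≤ u ∧ IntegrableOn f (Ioc 0 u)} := by
  refine LipschitzOnWith.of_dist_le' fun a ha b hb => ?_
  rw [Real.dist_eq, Real.dist_eq,
    sub_eq_intervalIntegral_of_eq_add_integral hx hb.1 ha.1 hb.2 ha.2]
  exact intervalIntegral.norm_integral_le_of_norm_le_const fun s _ =>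
    (Real.norm_eq_abs _).trans_le (hf s)

/-- `x` is Lipschitz at the times `u` where `f` is integrable on `(0, u]`, and equals `x 0` at
the others, where the integral takes the junk value `0`. -/
lemma aemeasurable_of_eq_add_integral (hx : ∀ t ≥ (0:ℝ), x t = x 0 + ∫ s in (0:ℝ)..t, f s)
    (hf : ∀ s, |f s| ≤ C) :
    AEMeasurable x (volume.restrict (Ici 0)) := by
  set S := {u | 0 ≤ u ∧ IntegrableOn f (Ioc 0 u)}
  have hS : MeasurableSet S := OrdConnected.measurableSet
    ⟨fun a ha b hb u hu => ⟨ha.1.trans hu.1, hb.2.mono_set (Ioc_subset_Ioc_right hu.2)⟩⟩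
  have hconst : ∀ u ∈ Ici 0 \ S, x u = x 0 := fun u hu => by
    have hxu := hx u hu.1
    rwa [intervalIntegral.integral_of_le hu.1, integral_undef fun h => hu.2 ⟨hu.1, h⟩,
      add_zero] at hxu
  rw [← union_sdiff_cancel (show S ⊆ Ici 0 from fun u hu => hu.1), aemeasurable_union_iff]
  exact ⟨(lipschitzOnWith_of_eq_add_integral hx hf).continuousOn.aemeasurable hS,
    aemeasurable_const.congr ((ae_restrict_mem (measurableSet_Ici.diff hS)).mono
      fun u hu => (hconst u hu).symm)⟩

lemma continuousOn_Icc_of_eq_add_integral (hx : ∀ t ≥ (0:ℝ), x t = x 0 + ∫ s in (0:ℝ)..t, f s)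
    (hb : 0 ≤ b) (hf : IntegrableOn f (Ioc 0 b)) : ContinuousOn x (Icc 0 b) := by
  have hprim := (intervalIntegral.continuousOn_primitive_interval'
    ((intervalIntegrable_iff_integrableOn_Ioc_of_le hb).2 hf) left_mem_uIcc).const_add (x 0)
  rw [uIcc_of_le hb] at hprim
  exact hprim.congr fun u hu => hx u hu.1

lemma eq_of_eq_add_integral_of_eqOn_Ioo (hx : ∀ t ≥ (0:ℝ), x t = x 0 + ∫ s in (0:ℝ)..t, f s)
    (hf : ∀ u, IntegrableOn f (Ioc 0 u)) (ha : 0 ≤ a) (hab : a ≤ b)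
    (h0 : ∀ u ∈ Ioo a b, f u = 0) : x b = x a := by
  have hsub := sub_eq_intervalIntegral_of_eq_add_integral hx ha (ha.trans hab) (hf a) (hf b)
  rw [intervalIntegral.integral_congr_Ioo_of_le hab h0, intervalIntegral.integral_zero] at hsub
  linarith

lemma le_of_eq_add_integral_of_nonneg_on_Ioo (hx : ∀ t ≥ (0:ℝ), x t = x 0 + ∫ s in (0:ℝ)..t, f s)
    (hf : ∀ u, IntegrableOn f (Ioc 0 u)) (ha : 0 ≤ a) (hab : a ≤ b)
    (h0 : ∀ u ∈ Ioo a b, 0 ≤ f u) : x a ≤ x b := by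
  have hsub := sub_eq_intervalIntegral_of_eq_add_integral hx ha (ha.trans hab) (hf a) (hf b)
  have hnonneg : 0 ≤ ∫ s in a..b, f s := by
    simpa using intervalIntegral.integral_mono_on_of_le_Ioo hab intervalIntegrable_const
      ((intervalIntegrable_iff_integrableOn_Ioc_of_le hab).2
        ((hf b).mono_set (Ioc_subset_Ioc_left ha))) h0
  linarith

end IntegralEquation

/-- For the three-agent 1D HK system with ordered agents `x₁ ≤ x₂ ≤ x₃`, if a Caratheodory
solution (in integral form) satisfies `|x₂(t̄) - x₁(t̄)| > 1` at some time `t̄ ≥ 0`, then the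
leftmost agent is frozen: `x₁(t) = x₁(t̄)` for all `t ≥ t̄`. -/
theorem stmt_8 (x1 x2 x3 : ℝ → ℝ)
    (horder : ∀ t ≥ (0:ℝ), x1 t ≤ x2 t ∧ x2 t ≤ x3 t)
    (hsol1 : ∀ t ≥ (0:ℝ), x1 t = x1 0 + ∫ s in (0:ℝ)..t,
      ((if |x1 s - x2 s| < 1 then (1:ℝ) else 0) * (x2 s - x1 s)
        + (if |x1 s - x3 s| < 1 then (1:ℝ) else 0) * (x3 s - x1 s)))
    (hsol2 : ∀ t ≥ (0:ℝ), x2 t = x2 0 + ∫ s in (0:ℝ)..t,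
      ((if |x1 s - x2 s| < 1 then (1:ℝ) else 0) * (x1 s - x2 s)
        + (if |x2 s - x3 s| < 1 then (1:ℝ) else 0) * (x3 s - x2 s)))
    (hsol3 : ∀ t ≥ (0:ℝ), x3 t = x3 0 + ∫ s in (0:ℝ)..t,
      ((if |x1 s - x3 s| < 1 then (1:ℝ) else 0) * (x1 s - x3 s)
        + (if |x2 s - x3 s| < 1 then (1:ℝ) else 0) * (x2 s - x3 s)))
    (tb : ℝ) (htb : 0 ≤ tb)
    (hgt : |x2 tb - x1 tb| > 1) :
    ∀ t ≥ tb, x1 t = x1 tb := by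
  intro t ht
  have hm1 := aemeasurable_of_eq_add_integral hsol1 fun _ =>
    abs_hkWeight_mul_add_le (abs_sub_comm _ _) (abs_sub_comm _ _)
  have hm2 := aemeasurable_of_eq_add_integral hsol2 fun _ =>
    abs_hkWeight_mul_add_le rfl (abs_sub_comm _ _)
  have hm3 := aemeasurable_of_eq_add_integral hsol3 fun _ => abs_hkWeight_mul_add_le rfl rfl
  have hIoc : ∀ u, Ioc 0 u ⊆ Ici (0:ℝ) := fun u => Ioc_subset_Ioi_self.trans Ioi_subset_Ici_self
  have hI1 := fun u => integrableOn_hkWeight_mul_add (hIoc u) measure_Ioc_lt_top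
    (hm1.sub hm2) (hm2.sub hm1) (hm1.sub hm3) (hm3.sub hm1)
    (fun _ => abs_sub_comm _ _) (fun _ => abs_sub_comm _ _)
  have hI2 := fun u => integrableOn_hkWeight_mul_add (hIoc u) measure_Ioc_lt_top
    (hm1.sub hm2) (hm1.sub hm2) (hm2.sub hm3) (hm3.sub hm2)
    (fun _ => rfl) (fun _ => abs_sub_comm _ _)
  have hfrozen : ∀ s ≥ tb, (∀ u ∈ Ioo tb s, 1 < x2 u - x1 u) → x1 s = x1 tb ∧ x2 tb ≤ x2 s :=
    fun s hs hgap =>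
      ⟨eq_of_eq_add_integral_of_eqOn_Ioo hsol1 hI1 htb hs fun u hu =>
        hk_drift_left_eq_zero (horder u (htb.trans hu.1.le)).2 (hgap u hu),
      le_of_eq_add_integral_of_nonneg_on_Ioo hsol2 hI2 htb hs fun u hu =>
        hk_drift_middle_nonneg (horder u (htb.trans hu.1.le)).2 (hgap u hu)⟩
  have hcont : ContinuousOn (fun s => x2 s - x1 s) (Icc tb t) :=
    ((continuousOn_Icc_of_eq_add_integral hsol2 (htb.trans ht) (hI2 t)).sub
      (continuousOn_Icc_of_eq_add_integral hsol1 (htb.trans ht) (hI1 t))).mono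
      (Icc_subset_Icc_left htb)
  have hgap : ∀ s ∈ Icc tb t, 1 < x2 s - x1 s := by
    refine forall_lt_on_Icc_of_continuousOn hcont ?_ fun s hs hbefore => ?_
    · rwa [gt_iff_lt, abs_of_nonneg (sub_nonneg.2 (horder tb htb).1)] at hgt
    · obtain ⟨hx1, hx2⟩ := hfrozen s hs.1 hbefore
      linarith
  exact (hfrozen t ht fun u hu => hgap u (Ioo_subset_Icc_self hu)).1
end

section
/- The function x_1(t)=-2/3-(1/3)e^{-3t/2}, x_2(t)=1/3-(1/3)e^{-3t/2}, x_3(t)=1/3+(2/3)e^{-3t/2} satisfies: x_2(t)=x_1(t)+1 for all t≥0, 0<x_3(t)-x_2(t)<1 for all t>0, and there exists a measurable α:[0,∞)→[0,1], namely α(t)=(x_3(t)-x_2(t))/2=e^{-3t/2}/2, such that ẋ_1=α, ẋ_2=-α+(x_3-x_2), ẋ_3=(x_2-x_3) for all t>0. -/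
open Real Set

/-
On the sliding mode `x₂ - x₁ = 1` the Filippov coefficient `α` must keep the gap constant, i.e.
`ẋ₂ = ẋ₁`, which forces `α = (x₃ - x₂)/2`. The remaining gap `x₃ - x₂` then obeys the linear
equation `ẏ = -(3/2) y` with `y(0) = 1`, so everything is an affine function of `e^{-3t/2}`, which
lies in `(0, 1)` for `t > 0`.
-/

lemma hasDerivAt_const_mul_exp_mul (c k t : ℝ) :
    HasDerivAt (fun t => c * exp (k * t)) (c * k * exp (k * t)) t := by
  simpa [mul_comm, mul_left_comm, mul_assoc] using (((hasDerivAt_id t).const_mul k).exp).const_mul c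

/-- The explicit sliding-mode trajectory
`x₁ = -2/3 - e^{-3t/2}/3`, `x₂ = 1/3 - e^{-3t/2}/3`, `x₃ = 1/3 + 2 e^{-3t/2}/3`
satisfies `x₂ = x₁ + 1` for all `t ≥ 0`, `0 < x₃ - x₂ < 1` for all `t > 0`, and, with the
measurable coefficient `α(t) = (x₃(t) - x₂(t))/2 = e^{-3t/2}/2 ∈ [0,1]`, solves
`ẋ₁ = α`, `ẋ₂ = -α + (x₃ - x₂)`, `ẋ₃ = x₂ - x₃` for all `t > 0`. -/
theorem stmt_9 (x1 x2 x3 α : ℝ → ℝ)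
    (h1 : ∀ t, x1 t = -2/3 - (1/3) * Real.exp (-(3/2) * t))
    (h2 : ∀ t, x2 t = 1/3 - (1/3) * Real.exp (-(3/2) * t))
    (h3 : ∀ t, x3 t = 1/3 + (2/3) * Real.exp (-(3/2) * t))
    (hα : ∀ t, α t = Real.exp (-(3/2) * t) / 2) :
    (∀ t, α t = (x3 t - x2 t) / 2) ∧
    Measurable α ∧
    (∀ t ≥ (0:ℝ), 0 ≤ α t ∧ α t ≤ 1) ∧
    (∀ t ≥ (0:ℝ), x2 t = x1 t + 1) ∧
    (∀ t > (0:ℝ), 0 < x3 t - x2 t ∧ x3 t - x2 t < 1) ∧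
    (∀ t > (0:ℝ),
      HasDerivAt x1 (α t) t ∧
      HasDerivAt x2 (-(α t) + (x3 t - x2 t)) t ∧
      HasDerivAt x3 (x2 t - x3 t) t) := by
  obtain rfl : x1 = _ := funext h1
  obtain rfl : x2 = _ := funext h2
  obtain rfl : x3 = _ := funext h3
  obtain rfl : α = _ := funext hα
  have hpos (t : ℝ) : 0 < exp (-(3/2) * t) := exp_pos _
  have hderiv (c t : ℝ) := hasDerivAt_const_mul_exp_mul c (-(3/2)) t
  refine ⟨fun t => by ring, by fun_prop, fun t ht => ?_, fun t _ => by ring, fun t ht => ?_,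
    fun t _ => ⟨?_, ?_, ?_⟩⟩
  · have hle : exp (-(3/2) * t) ≤ 1 := exp_le_one_iff.mpr (by linarith)
    constructor <;> linarith [hpos t]
  · have hlt : exp (-(3/2) * t) < 1 := exp_lt_one_iff.mpr (by linarith)
    constructor <;> linarith [hpos t]
  · exact ((hderiv (1/3) t).const_sub (-2/3)).congr_deriv (by ring)
  · exact ((hderiv (1/3) t).const_sub (1/3)).congr_deriv (by ring)
  · exact ((hderiv (2/3) t).const_add (1/3)).congr_deriv (by ring)
end

section
/- Let x:[0,∞)→ℝ^N be Lipschitz with each component x_i absolutely continuous, and suppose for almost every t there exist coefficients α_{ij}(t)=α_{ji}(t)∈[0,1] such that ẋ_i(t)=∑_{j≠i} α_{ij}(t)·χ_{|x_i(t)-x_j(t)|≤1}·(x_j(t)-x_i(t)). Then for every T^1<T^2, the closed interval [min_i x_i(T^2), max_i x_i(T^2)] is contained in [min_i x_i(T^1), max_i x_i(T^1)]. -/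
open Real Set Finset MeasureTheory Filter Topology NNReal

/-!
The maximum `M t = ⨆ i, x i t` of finitely many Lipschitz agents is Lipschitz, hence absolutely
continuous, so it suffices that `M' ≤ 0` a.e. Where `M` and a maximal agent `x i` are both
differentiable, `M - x i ≥ 0` vanishes at `t`, so `M'(t) = x_i'(t)`; and a maximal agent is only
attracted downwards. The minimum is the maximum of `-x`, which solves the same system.
-/

theorem AbsolutelyContinuousOnInterval.le_of_ae_deriv_nonpos {f : ℝ → ℝ} {a b : ℝ}
    (hf : AbsolutelyContinuousOnInterval f a b) (hab : a ≤ b)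
    (hderiv : ∀ᵐ t ∂volume.restrict (Icc a b), deriv f t ≤ 0) : f b ≤ f a := by
  have hint : 0 ≤ ∫ t in a..b, -deriv f t :=
    intervalIntegral.integral_nonneg_of_ae_restrict hab (hderiv.mono fun _ h ↦ neg_nonneg.2 h)
  rw [intervalIntegral.integral_neg, hf.integral_deriv_eq_sub] at hint
  linarith

theorem HasDerivAt.eq_of_eventuallyLE_of_eq {f g : ℝ → ℝ} {f' g' t : ℝ}
    (hf : HasDerivAt f f' t) (hg : HasDerivAt g g' t) (hle : f ≤ᶠ[𝓝 t] g) (heq : f t = g t) :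
    f' = g' := by
  have hmin : IsLocalMin (g - f) t :=
    hle.mono fun u hu ↦ by simpa [heq] using hu
  linarith [hmin.hasDerivAt_eq_zero (hg.sub hf)]

theorem LipschitzWith.ciSup {α ι : Type*} [PseudoMetricSpace α] [Finite ι] [Nonempty ι]
    {f : ι → α → ℝ} {K : ℝ≥0} (hf : ∀ i, LipschitzWith K (f i)) :
    LipschitzWith K fun a ↦ ⨆ i, f i a :=
  LipschitzWith.of_le_add_mul K fun a b ↦ ciSup_le fun i ↦
    ((hf i).le_add_mul a b).trans <| by
      gcongr; exact le_ciSup (Finite.bddAbove_range fun j ↦ f j b) i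

theorem Real.iInf_eq_neg_iSup_neg {ι : Sort*} (f : ι → ℝ) : ⨅ i, f i = -⨆ i, -f i := by
  have := Real.mul_iSup_of_nonpos (r := -1) (by norm_num) (fun i ↦ -f i)
  simp only [neg_mul, one_mul, neg_neg] at this
  exact this.symm

theorem iSup_le_iSup_of_ae_deriv_nonpos_at_argmax {ι : Type*} [Finite ι] [Nonempty ι]
    {x : ι → ℝ → ℝ} {C : ℝ≥0} (hx : ∀ i, LipschitzWith C (x i)) {a b : ℝ} (hab : a ≤ b)
    (hmax : ∀ᵐ t ∂volume.restrict (Icc a b),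
      ∀ i, (∀ j, x j t ≤ x i t) → ∃ d ≤ 0, HasDerivAt (x i) d t) :
    ⨆ i, x i b ≤ ⨆ i, x i a := by
  have hM := LipschitzWith.ciSup hx
  refine hM.lipschitzOnWith.absolutelyContinuousOnInterval.le_of_ae_deriv_nonpos hab ?_
  filter_upwards [hmax, ae_restrict_of_ae hM.ae_differentiableAt] with t ht hMt
  obtain ⟨i, hi⟩ := Finite.exists_max fun i ↦ x i t
  obtain ⟨d, hd, hxi⟩ := ht i hi
  have hle : x i ≤ᶠ[𝓝 t] fun u ↦ ⨆ j, x j u :=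
    Eventually.of_forall fun u ↦ le_ciSup (Finite.bddAbove_range fun j ↦ x j u) i
  have heq : x i t = ⨆ j, x j t :=
    le_antisymm (le_ciSup (Finite.bddAbove_range fun j ↦ x j t) i) (ciSup_le hi)
  rwa [← hxi.eq_of_eventuallyLE_of_eq hMt.hasDerivAt hle heq]

section HegselmannKrause

variable {ι : Type*} [Fintype ι] [DecidableEq ι]

noncomputable def hkVelocity (α : ι → ι → ℝ) (y : ι → ℝ) (i : ι) : ℝ :=
  ∑ j ∈ univ.erase i, α i j * (if |y i - y j| ≤ 1 then 1 else 0) * (y j - y i)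

variable {α : ι → ι → ℝ} {y : ι → ℝ} {i : ι}

lemma hkVelocity_nonpos_of_isMax (hα : ∀ j, 0 ≤ α i j) (hi : ∀ j, y j ≤ y i) :
    hkVelocity α y i ≤ 0 :=
  sum_nonpos fun j _ ↦ mul_nonpos_of_nonneg_of_nonpos
    (mul_nonneg (hα j) (by split_ifs <;> norm_num)) (sub_nonpos.2 (hi j))

lemma hkVelocity_nonneg_of_isMin (hα : ∀ j, 0 ≤ α i j) (hi : ∀ j, y i ≤ y j) :
    0 ≤ hkVelocity α y i :=
  sum_nonneg fun j _ ↦ mul_nonneg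
    (mul_nonneg (hα j) (by split_ifs <;> norm_num)) (sub_nonneg.2 (hi j))

end HegselmannKrause

/-- Contractivity of the support for 1D Krasovskii solutions of the HK model: if each agent
moves a.e. by a symmetric convex combination of attractions toward agents at distance at
most 1, then the interval spanned by the agents is weakly decreasing in time. -/
theorem stmt_10 (N : ℕ) (hN : 0 < N) (x : Fin N → ℝ → ℝ)
    (hLip : ∃ C : NNReal, ∀ i, LipschitzWith C (x i))
    (hode : ∀ᵐ t ∂(volume.restrict (Set.Ici (0:ℝ))),
      ∃ α : Fin N → Fin N → ℝ,
        (∀ i j, α i j = α j i ∧ 0 ≤ α i j ∧ α i j ≤ 1) ∧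
        ∀ i, HasDerivAt (x i)
          (∑ j ∈ Finset.univ.erase i,
            α i j * (if |x i t - x j t| ≤ 1 then (1:ℝ) else 0) * (x j t - x i t)) t) :
    ∀ T1 T2 : ℝ, 0 ≤ T1 → T1 ≤ T2 →
      Set.Icc (⨅ i, x i T2) (⨆ i, x i T2) ⊆ Set.Icc (⨅ i, x i T1) (⨆ i, x i T1) := by
  intro T1 T2 hT1 hT12
  have : Nonempty (Fin N) := ⟨⟨0, hN⟩⟩
  obtain ⟨C, hC⟩ := hLip
  have hode' := ae_restrict_of_ae_restrict_of_subset (s := Set.Icc T1 T2)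
    (fun t ht ↦ Set.mem_Ici.2 (hT1.trans ht.1)) hode
  have hsup : ⨆ i, x i T2 ≤ ⨆ i, x i T1 :=
    iSup_le_iSup_of_ae_deriv_nonpos_at_argmax hC hT12 <| hode'.mono
      fun t ⟨α, hα, hder⟩ i hi ↦
        ⟨_, hkVelocity_nonpos_of_isMax (fun j ↦ (hα i j).2.1) hi, hder i⟩
  have hsup_neg : ⨆ i, -x i T2 ≤ ⨆ i, -x i T1 :=
    iSup_le_iSup_of_ae_deriv_nonpos_at_argmax (x := fun i t ↦ -x i t) (fun i ↦ (hC i).neg) hT12 <|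
      hode'.mono fun t ⟨α, hα, hder⟩ i hi ↦
        ⟨_, neg_nonpos.2 <| hkVelocity_nonneg_of_isMin (fun j ↦ (hα i j).2.1)
          fun j ↦ neg_le_neg_iff.1 (hi j), (hder i).neg⟩
  have hinf : ⨅ i, x i T1 ≤ ⨅ i, x i T2 := by
    rw [Real.iInf_eq_neg_iSup_neg, Real.iInf_eq_neg_iSup_neg]
    exact neg_le_neg hsup_neg
  exact Set.Icc_subset_Icc hinf hsup
end

section
/- For the ODE on ℝ² with f(x_1,x_2)=(-1,0) if x_2>x_1, f=(1,1) if x_2=x_1, f=(1,0) if x_2<x_1, and initial condition (0,0): (a) the function t↦(t,t) is the unique classical solution; (b) for every t̄∈[0,∞], the functions equal to (t,t) on [0,t̄) and to (t̄±(t-t̄), t̄) on [t̄,∞) are Caratheodory solutions; (c) there is no other Caratheodory solution. -/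
/-!
Along a solution `x`, the gap `g = x₂ - x₁` satisfies `g t - g s = ∫ₛᵗ sign (g r) dr`: once `g`
leaves `0` it moves away from `0` at unit speed and never returns. So `g` vanishes on an initial
interval `[0, t̄]` (possibly all of `[0, ∞)`) and equals `±(t - t̄)` afterwards, and since `fEx`
depends only on the sign of the gap, the gap determines the solution. A classical solution cannot
switch at `t̄`: its right derivative there would be `fEx (t̄, t̄) = (1, 1)` rather than `(±1, 0)`.
-/

open Real Set

/-- The discontinuous planar vector field of Example 2.4: `(-1,0)` above the diagonal,
`(1,1)` on the diagonal, `(1,0)` below. -/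
noncomputable def fEx : ℝ × ℝ → ℝ × ℝ := fun p =>
  if p.1 < p.2 then (-1, 0) else if p.2 < p.1 then (1, 0) else (1, 1)

open MeasureTheory intervalIntegral

section IntegralSolution

variable {E : Type*} [NormedAddCommGroup E]

theorem integrableOn_Ioc_of_forall_lt {F : ℝ → E} {C : ℝ} (hF : ∀ s, ‖F s‖ ≤ C) {a b : ℝ}
    (h : ∀ u < b, IntegrableOn F (Ioc a u)) : IntegrableOn F (Ioc a b) := by
  have hmeas : AEStronglyMeasurable F (volume.restrict (⋃ n : ℕ, Ioc a (b - 1 / (n + 1)))) :=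
    aestronglyMeasurable_iUnion_iff.2 fun n =>
      (h _ (sub_lt_self b Nat.one_div_pos_of_nat)).aestronglyMeasurable
  have hsub : Ioo a b ⊆ ⋃ n : ℕ, Ioc a (b - 1 / (n + 1)) := fun s hs => by
    obtain ⟨n, hn⟩ := exists_nat_one_div_lt (sub_pos.2 hs.2)
    exact mem_iUnion.2 ⟨n, hs.1, by linarith⟩
  refine Integrable.mono' (integrableOn_const measure_Ioc_lt_top.ne (C := C)) ?_ (ae_of_all _ hF)
  rw [← Measure.restrict_congr_set Ioo_ae_eq_Ioc]
  exact hmeas.mono_measure (Measure.restrict_mono hsub le_rfl)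

variable [NormedSpace ℝ E]

/-- Caratheodory solutions of `ẋ = f x` on `[0, ∞)`, in integral form. -/
def IsIntegralSolution (f : E → E) (x : ℝ → E) : Prop :=
  ∀ t ≥ (0:ℝ), x t = x 0 + ∫ s in (0:ℝ)..t, f (x s)

namespace IsIntegralSolution

variable {f : E → E} {x y : ℝ → E}

theorem intervalIntegrable {C : ℝ} (hf : ∀ p, ‖f p‖ ≤ C) (hx : IsIntegralSolution f x)
    {t : ℝ} (ht : 0 ≤ t) : IntervalIntegrable (fun s => f (x s)) volume 0 t := by
  set F := fun s => f (x s)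
  by_contra hbad
  set B := {t : ℝ | 0 ≤ t ∧ ¬ IntervalIntegrable F volume 0 t}
  have hBne : B.Nonempty := ⟨t, ht, hbad⟩
  set T := sInf B
  have hT : 0 ≤ T := le_csInf hBne fun _ h => h.1
  have hbelow : ∀ u < T, IntegrableOn F (Ioc 0 u) := fun u huT => by
    rcases le_total u 0 with hu | hu
    · rw [Ioc_eq_empty_of_le hu]; exact integrableOn_empty
    rw [← intervalIntegrable_iff_integrableOn_Ioc_of_le hu]
    by_contra h
    exact (csInf_le (⟨0, fun _ h => h.1⟩ : BddBelow B) ⟨hu, h⟩).not_gt huT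
  have hbad_gt : ∀ u, T < u → ¬ IntervalIntegrable F volume 0 u := fun u hu h => by
    obtain ⟨b, hb, hbu⟩ := exists_lt_of_csInf_lt hBne hu
    exact hb.2 (h.mono_set (uIcc_subset_uIcc_left (by
      rw [uIcc_of_le (hb.1.trans hbu.le)]; exact ⟨hb.1, hbu.le⟩)))
  -- beyond `T` the integral takes the junk value `0`, so `x` is frozen at `x 0`
  have hT1 : IntegrableOn F (Ioc T (T + 1)) := by
    refine (integrableOn_const measure_Ioc_lt_top.ne (C := f (x 0))).congr_fun (fun s hs => ?_)
      measurableSet_Ioc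
    simp only [F, hx s (hT.trans hs.1.le), integral_undef (hbad_gt s hs.1), add_zero]
  refine hbad_gt (T + 1) (lt_add_one T) ?_
  rw [intervalIntegrable_iff_integrableOn_Ioc_of_le (by linarith),
    ← Ioc_union_Ioc_eq_Ioc hT (by linarith)]
  exact (integrableOn_Ioc_of_forall_lt (fun s => hf _) hbelow).union hT1

theorem sub_eq_integral {C : ℝ} (hf : ∀ p, ‖f p‖ ≤ C) (hx : IsIntegralSolution f x) {s t : ℝ}
    (hs : 0 ≤ s) (hst : s ≤ t) : x t - x s = ∫ r in s..t, f (x r) := by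
  rw [hx t (hs.trans hst), hx s hs, ← integral_interval_sub_left
    (hx.intervalIntegrable hf (hs.trans hst)) (hx.intervalIntegrable hf hs)]
  abel

theorem continuousOn {C : ℝ} (hf : ∀ p, ‖f p‖ ≤ C) (hx : IsIntegralSolution f x) :
    ContinuousOn x (Ici 0) := by
  refine (LipschitzOnWith.of_dist_le' (K := C) fun a ha b hb => ?_).continuousOn
  wlog hba : b ≤ a generalizing a b
  · rw [dist_comm, dist_comm a]; exact this b hb a ha (le_of_not_ge hba)
  rw [dist_eq_norm, hx.sub_eq_integral hf hb hba, Real.dist_eq]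
  exact norm_integral_le_of_norm_le_const fun r _ => hf _

theorem eq_of_comp_eq (hx : IsIntegralSolution f x) (hy : IsIntegralSolution f y)
    (h0 : x 0 = y 0) (h : ∀ t ≥ (0:ℝ), f (x t) = f (y t)) : ∀ t ≥ (0:ℝ), x t = y t := by
  intro t ht
  rw [hx t ht, hy t ht, h0, integral_congr fun s hs => h s ?_]
  rw [uIcc_of_le ht] at hs
  exact hs.1

theorem congr (hy : IsIntegralSolution f y) (h : ∀ t ≥ (0:ℝ), x t = y t) :
    IsIntegralSolution f x := by
  intro t ht
  rw [h t ht, h 0 le_rfl, hy t ht, integral_congr fun s hs => ?_]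
  rw [uIcc_of_le ht] at hs
  simp only [h s hs.1]

theorem of_hasDerivAt [CompleteSpace E] [MeasurableSpace E] [BorelSpace E]
    [SecondCountableTopology E] {C : ℝ} (hf_meas : Measurable f) (hf : ∀ p, ‖f p‖ ≤ C)
    (hc : ContinuousOn x (Ici 0)) {S : Set ℝ} (hS : S.Countable)
    (hd : ∀ t ∈ Ioi 0 \ S, HasDerivAt x (f (x t)) t) : IsIntegralSolution f x := by
  intro t ht
  have hint : IntervalIntegrable (fun s => f (x s)) volume 0 t := by
    rw [intervalIntegrable_iff_integrableOn_Ioc_of_le ht]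
    have hxm : AEMeasurable x (volume.restrict (Ioc 0 t)) :=
      (hc.mono fun s hs => mem_Ici.2 hs.1.le).aemeasurable measurableSet_Ioc
    exact Integrable.mono' (integrableOn_const measure_Ioc_lt_top.ne (C := C))
      (hf_meas.comp_aemeasurable hxm).aestronglyMeasurable (ae_of_all _ fun s => hf _)
  rw [integral_eq_of_hasDerivAt_off_countable_of_le _ _ ht hS (hc.mono Icc_subset_Ici_self)
    (fun s hs => hd s ⟨hs.1.1, hs.2⟩) hint]
  abel

end IsIntegralSolution

end IntegralSolution

/-- Solutions of the scalar equation `ġ = sign g` on `[0, ∞)`, in integral form. -/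
structure SolvesSignODE (g : ℝ → ℝ) : Prop where
  continuousOn : ContinuousOn g (Ici 0)
  sub_eq : ∀ s t, 0 ≤ s → s ≤ t → g t - g s = ∫ r in s..t, Real.sign (g r)

namespace SolvesSignODE

variable {g : ℝ → ℝ}

theorem neg (hg : SolvesSignODE g) : SolvesSignODE (-g) where
  continuousOn := hg.continuousOn.neg
  sub_eq s t hs hst := by
    simp only [Pi.neg_apply, Real.sign_neg, intervalIntegral.integral_neg, ← hg.sub_eq s t hs hst]
    ring

theorem pos_of_pos (hg : SolvesSignODE g) {a t : ℝ} (ha : 0 ≤ a) (hga : 0 < g a) (hat : a ≤ t) :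
    0 < g t := by
  -- at the first `u ≥ a` with `g u ≤ 0` we would have `g u = g a + (u - a) > 0`
  by_contra! hgt
  set K := Icc a t ∩ g ⁻¹' Iic 0
  have hK : IsCompact K := isCompact_Icc.of_isClosed_subset
    ((hg.continuousOn.mono fun r hr => ha.trans hr.1).preimage_isClosed_of_isClosed
      isClosed_Icc isClosed_Iic) inter_subset_left
  set u := sInf K
  have huK : u ∈ K := hK.sInf_mem ⟨t, ⟨hat, le_rfl⟩, hgt⟩
  have hau : a < u := huK.1.1.lt_of_ne fun h => (huK.2.trans_lt (h ▸ hga)).false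
  have hpos : ∀ r ∈ Ico a u, 0 < g r := fun r hr => by
    by_contra! h
    exact (csInf_le hK.bddBelow ⟨⟨hr.1, hr.2.le.trans huK.1.2⟩, h⟩).not_gt hr.2
  have hint : ∫ r in a..u, Real.sign (g r) = u - a := by
    rw [intervalIntegral.integral_congr_ae (g := fun _ => (1 : ℝ)),
      intervalIntegral.integral_const, smul_eq_mul, mul_one]
    filter_upwards [Measure.ae_ne volume u] with r hru hr
    rw [uIoc_of_le hau.le] at hr
    exact Real.sign_of_pos (hpos r ⟨hr.1.le, hr.2.lt_of_ne hru⟩)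
  have hgu : g u ≤ 0 := huK.2
  linarith [hg.sub_eq a u ha hau.le]

theorem sign_eq_of_le (hg : SolvesSignODE g) {a t : ℝ} (ha : 0 ≤ a) (hga : g a ≠ 0)
    (hat : a ≤ t) : Real.sign (g t) = Real.sign (g a) := by
  rcases hga.lt_or_gt with hneg | hpos
  · have := hg.neg.pos_of_pos ha (neg_pos.2 hneg) hat
    rw [Real.sign_of_neg hneg, Real.sign_of_neg (neg_pos.1 this)]
  · rw [Real.sign_of_pos hpos, Real.sign_of_pos (hg.pos_of_pos ha hpos hat)]

theorem eq_zero_of_le (hg : SolvesSignODE g) {s t : ℝ} (hs : 0 ≤ s) (hst : s ≤ t)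
    (hgt : g t = 0) : g s = 0 := by
  by_contra h
  have := hg.sign_eq_of_le hs h hst
  rw [hgt, Real.sign_zero, eq_comm, Real.sign_eq_zero_iff] at this
  exact h this

theorem eq_zero_or_eq_ite (hg : SolvesSignODE g) (hg0 : g 0 = 0) :
    (∀ t ≥ (0:ℝ), g t = 0) ∨ ∃ tb ≥ (0:ℝ), ∃ δ : ℝ, (δ = 1 ∨ δ = -1) ∧
      ∀ t ≥ (0:ℝ), g t = if t < tb then 0 else δ * (t - tb) := by
  set Z := Ici 0 ∩ g ⁻¹' {0}
  by_cases hZ : BddAbove Z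
  swap
  · left
    intro t ht
    obtain ⟨z, hz, htz⟩ := not_bddAbove_iff.1 hZ t
    exact hg.eq_zero_of_le ht htz.le hz.2
  right
  set tb := sSup Z
  have htbZ : tb ∈ Z := (hg.continuousOn.preimage_isClosed_of_isClosed isClosed_Ici
    isClosed_singleton).csSup_mem ⟨0, self_mem_Ici, hg0⟩ hZ
  have htb0 : 0 ≤ tb := htbZ.1
  have hne : ∀ t, tb < t → g t ≠ 0 := fun t ht h =>
    (le_csSup hZ ⟨htb0.trans ht.le, h⟩).not_gt ht
  have hsign : ∀ r, tb < r → Real.sign (g r) = Real.sign (g (tb + 1)) := fun r hr => by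
    rcases le_total r (tb + 1) with h | h
    · exact (hg.sign_eq_of_le (htb0.trans hr.le) (hne r hr) h).symm
    · exact hg.sign_eq_of_le (by linarith) (hne _ (lt_add_one tb)) h
  refine ⟨tb, htb0, _, (Real.sign_apply_eq_of_ne_zero _ (hne _ (lt_add_one tb))).symm,
    fun t ht => ?_⟩
  split_ifs with htb
  · exact hg.eq_zero_of_le ht htb.le htbZ.2
  · have htb : tb ≤ t := not_lt.1 htb
    have := hg.sub_eq tb t htb0 htb
    rw [intervalIntegral.integral_congr_ae
        (ae_of_all _ fun r hr => hsign r (uIoc_of_le htb ▸ hr).1),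
      intervalIntegral.integral_const, smul_eq_mul, htbZ.2] at this
    linarith

end SolvesSignODE

theorem fEx_diag (t : ℝ) : fEx (t, t) = (1, 1) := by
  simp [fEx]

theorem fEx_eq_of_snd_sub_fst_eq {p q : ℝ × ℝ} (h : p.2 - p.1 = q.2 - q.1) : fEx p = fEx q := by
  unfold fEx
  split_ifs <;> first | rfl | (exfalso; linarith)

theorem fEx_snd_sub_fst (p : ℝ × ℝ) : (fEx p).2 - (fEx p).1 = Real.sign (p.2 - p.1) := by
  unfold fEx
  split_ifs with h₁ h₂
  · rw [Real.sign_of_pos (sub_pos.2 h₁)]; norm_num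
  · rw [Real.sign_of_neg (sub_neg.2 h₂)]; norm_num
  · rw [show p.2 - p.1 = 0 by linarith, Real.sign_zero]; norm_num

theorem norm_fEx_le (p : ℝ × ℝ) : ‖fEx p‖ ≤ 1 := by
  unfold fEx
  split_ifs <;> simp [Prod.norm_def]

theorem measurable_fEx : Measurable fEx :=
  Measurable.ite (measurableSet_lt measurable_fst measurable_snd) measurable_const
    (Measurable.ite (measurableSet_lt measurable_snd measurable_fst) measurable_const
      measurable_const)

def gap (x : ℝ → ℝ × ℝ) (t : ℝ) : ℝ := (x t).2 - (x t).1

theorem IsIntegralSolution.solvesSignODE_gap {x : ℝ → ℝ × ℝ} (hx : IsIntegralSolution fEx x) :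
    SolvesSignODE (gap x) where
  continuousOn :=
    (continuous_snd.comp_continuousOn (hx.continuousOn norm_fEx_le)).sub
      (continuous_fst.comp_continuousOn (hx.continuousOn norm_fEx_le))
  sub_eq s t hs hst := by
    have hint := (hx.intervalIntegrable norm_fEx_le hs).symm.trans
      (hx.intervalIntegrable norm_fEx_le (hs.trans hst))
    have hcomm := (ContinuousLinearMap.snd ℝ ℝ ℝ - ContinuousLinearMap.fst ℝ ℝ ℝ)
      |>.intervalIntegral_comp_comm hint
    simp only [sub_apply, ContinuousLinearMap.coe_snd', ContinuousLinearMap.coe_fst',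
      fEx_snd_sub_fst] at hcomm
    simp only [gap]
    rw [hcomm, ← hx.sub_eq_integral norm_fEx_le hs hst, Prod.snd_sub, Prod.fst_sub]
    ring

noncomputable def switchSol (tb ε t : ℝ) : ℝ × ℝ :=
  if t < tb then (t, t) else (tb + ε * (t - tb), tb)

theorem switchSol_zero {tb : ℝ} (htb : 0 ≤ tb) (ε : ℝ) : switchSol tb ε 0 = (0, 0) := by
  unfold switchSol
  split_ifs with h
  · rfl
  · rw [le_antisymm (not_lt.1 h) htb]; simp

theorem gap_switchSol (tb ε t : ℝ) :
    gap (switchSol tb ε) t = if t < tb then 0 else -ε * (t - tb) := by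
  unfold gap switchSol
  split_ifs <;> ring

theorem continuous_switchSol (tb ε : ℝ) : Continuous (switchSol tb ε) := by
  have : switchSol tb ε = fun t => (min t tb + ε * max (t - tb) 0, min t tb) := by
    ext t <;> unfold switchSol <;> split_ifs with h
    all_goals first
      | simp [min_eq_left h.le, max_eq_right (sub_nonpos.2 h.le)]
      | simp [min_eq_right (not_lt.1 h), max_eq_left (sub_nonneg.2 (not_lt.1 h))]
  rw [this]
  fun_prop

theorem hasDerivAt_diag (t : ℝ) : HasDerivAt (fun s => ((s, s) : ℝ × ℝ)) (fEx (t, t)) t := by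
  rw [fEx_diag]
  exact (hasDerivAt_id t).prodMk (hasDerivAt_id t)

theorem hasDerivAt_horizontal (tb ε t : ℝ) :
    HasDerivAt (fun s => ((tb + ε * (s - tb), tb) : ℝ × ℝ)) (ε, 0) t := by
  simpa using (((hasDerivAt_id t).sub_const tb).const_mul ε |>.const_add tb).prodMk
    (hasDerivAt_const t tb)

theorem hasDerivAt_switchSol {tb ε : ℝ} (hε : ε = 1 ∨ ε = -1) {t : ℝ} (ht : t ≠ tb) :
    HasDerivAt (switchSol tb ε) (fEx (switchSol tb ε t)) t := by
  rcases ht.lt_or_gt with hlt | hgt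
  · have heq : switchSol tb ε =ᶠ[nhds t] fun s => (s, s) :=
      Filter.mem_of_superset (Iio_mem_nhds hlt) fun s hs => if_pos hs
    rw [heq.eq_of_nhds]
    exact (hasDerivAt_diag t).congr_of_eventuallyEq heq
  · have heq : switchSol tb ε =ᶠ[nhds t] fun s => (tb + ε * (s - tb), tb) :=
      Filter.mem_of_superset (Ioi_mem_nhds hgt) fun s hs => if_neg (not_lt.2 (le_of_lt hs))
    have hval : fEx (tb + ε * (t - tb), tb) = (ε, 0) := by
      rcases hε with rfl | rfl
      · simp [fEx, hgt, hgt.not_gt]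
      · simp [fEx, hgt]
    rw [heq.eq_of_nhds, hval]
    exact (hasDerivAt_horizontal tb ε t).congr_of_eventuallyEq heq

theorem isIntegralSolution_diag : IsIntegralSolution fEx fun t => ((t, t) : ℝ × ℝ) :=
  .of_hasDerivAt measurable_fEx norm_fEx_le (by fun_prop) countable_empty
    fun t _ => hasDerivAt_diag t

theorem isIntegralSolution_switchSol {tb ε : ℝ} (hε : ε = 1 ∨ ε = -1) :
    IsIntegralSolution fEx (switchSol tb ε) :=
  .of_hasDerivAt measurable_fEx norm_fEx_le (continuous_switchSol tb ε).continuousOn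
    (countable_singleton tb) fun _ ht => hasDerivAt_switchSol hε ht.2

theorem not_hasDerivWithinAt_switchSol (tb ε : ℝ) :
    ¬ HasDerivWithinAt (switchSol tb ε) (fEx (switchSol tb ε tb)) (Ici tb) tb := by
  intro h
  have hright : HasDerivWithinAt (switchSol tb ε) (ε, 0) (Ici tb) tb := by
    exact (hasDerivAt_horizontal tb ε tb).hasDerivWithinAt.congr_of_mem
      (fun s hs => if_neg (not_lt.2 hs)) self_mem_Ici
  have := (uniqueDiffOn_Ici tb tb self_mem_Ici).eq_deriv _ h hright
  simp [switchSol, fEx_diag] at this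

theorem IsIntegralSolution.eq_diag_or_eq_switchSol {x : ℝ → ℝ × ℝ}
    (hx : IsIntegralSolution fEx x) (hx0 : x 0 = (0, 0)) :
    (∀ t ≥ (0:ℝ), x t = (t, t)) ∨
      ∃ tb ≥ (0:ℝ), ∃ ε : ℝ, (ε = 1 ∨ ε = -1) ∧ ∀ t ≥ (0:ℝ), x t = switchSol tb ε t := by
  have hgap0 : gap x 0 = 0 := by simp [gap, hx0]
  -- `fEx` only sees the gap, so a solution is determined by its gap
  rcases hx.solvesSignODE_gap.eq_zero_or_eq_ite hgap0 with hg | ⟨tb, htb, δ, hδ, hg⟩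
  · refine .inl (hx.eq_of_comp_eq isIntegralSolution_diag hx0 fun t ht => ?_)
    exact fEx_eq_of_snd_sub_fst_eq ((hg t ht).trans (sub_self t).symm)
  · have hε : -δ = 1 ∨ -δ = -1 := by rcases hδ with rfl | rfl <;> norm_num
    refine .inr ⟨tb, htb, -δ, hε, hx.eq_of_comp_eq (isIntegralSolution_switchSol hε)
      (hx0.trans (switchSol_zero htb _).symm) fun t ht => fEx_eq_of_snd_sub_fst_eq ?_⟩
    exact (hg t ht).trans (by rw [← gap, gap_switchSol, neg_neg])

/-- For the ODE `ẋ = fEx(x)` with initial condition `(0,0)`: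
(a) `t ↦ (t,t)` is a classical solution and every classical solution coincides with it;
(b)&(c) the Caratheodory solutions (in the equivalent integral form) are exactly `t ↦ (t,t)`
together with, for every `t̄ ≥ 0` and sign `ε = ±1`, the function equal to `(t,t)` on
`[0,t̄)` and to `(t̄ + ε (t - t̄), t̄)` on `[t̄, ∞)`. -/
theorem stmt_14 :
    (∀ t ≥ (0:ℝ), HasDerivWithinAt (fun s => ((s, s) : ℝ × ℝ))
      (fEx (t, t)) (Set.Ici 0) t) ∧
    (∀ x : ℝ → ℝ × ℝ, x 0 = (0, 0) →
      (∀ t ≥ (0:ℝ), HasDerivWithinAt x (fEx (x t)) (Set.Ici 0) t) →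
      ∀ t ≥ (0:ℝ), x t = (t, t)) ∧
    (∀ x : ℝ → ℝ × ℝ, x 0 = (0, 0) →
      ((∀ t ≥ (0:ℝ), x t = x 0 + ∫ s in (0:ℝ)..t, fEx (x s)) ↔
        ((∀ t ≥ (0:ℝ), x t = (t, t)) ∨
          ∃ tb ≥ (0:ℝ), ∃ ε : ℝ, (ε = 1 ∨ ε = -1) ∧
            ∀ t ≥ (0:ℝ), x t = if t < tb then ((t, t) : ℝ × ℝ)
              else (tb + ε * (t - tb), tb)))) := by
  refine ⟨fun t _ => (hasDerivAt_diag t).hasDerivWithinAt, fun x hx0 hder => ?_,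
    fun x hx0 => ⟨fun hx => IsIntegralSolution.eq_diag_or_eq_switchSol hx hx0, ?_⟩⟩
  · have hx : IsIntegralSolution fEx x :=
      .of_hasDerivAt measurable_fEx norm_fEx_le (fun t ht => (hder t ht).continuousWithinAt)
        countable_empty fun t ht => (hder t ht.1.le).hasDerivAt (Ici_mem_nhds ht.1)
    rcases hx.eq_diag_or_eq_switchSol hx0 with hdiag | ⟨tb, htb, ε, -, hswitch⟩
    · exact hdiag
    · refine absurd ?_ (not_hasDerivWithinAt_switchSol tb ε)
      rw [← hswitch tb htb]
      exact ((hder tb htb).mono (Ici_subset_Ici.2 htb)).congr_of_mem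
        (fun t ht => (hswitch t (htb.trans ht)).symm) self_mem_Ici
  · rintro (hdiag | ⟨tb, -, ε, hε, hswitch⟩)
    · exact isIntegralSolution_diag.congr hdiag
    · exact (isIntegralSolution_switchSol hε).congr hswitch
end

section
/- For the variant two-agent 1D HK system with a(r)=1 for r≤1 and a(r)=0 for r>1, and initial condition with |x_{1,0}-x_{2,0}|=1, the function given by x_1(t)-x_2(t)=e^{-2t}(x_{1,0}-x_{2,0}), x_1(t)+x_2(t)=x_{1,0}+x_{2,0} is the unique Caratheodory solution. -/
/-!
The difference `u = x₁ - x₂` solves `u t = u 0 + ∫₀ᵗ φ (u s) ds` with `φ r = -2r` on `[-1, 1]`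
and `φ r = 0` outside, while `x₁ + x₂` is conserved. Since `φ` vanishes outside the closed set
`[-1, 1]`, `u` cannot leave it (after its last visit it would be constant), so `u` solves the
linear equation `u' = -2u` and `u t = e^{-2t} u 0`.

Lean's interval integral of a non-integrable function is `0`, so integrability has to be proved:
where the integral takes this junk value `u` equals `u 0`, elsewhere it is Lipschitz; hence `u`
is measurable and the bounded integrand `φ ∘ u` is integrable after all.
-/

open Real Set MeasureTheory intervalIntegral
open scoped NNReal

section IntegralEquation

variable {u f : ℝ → ℝ} {d : ℝ}

lemma lipschitzOnWith_of_eq_add_integral_s19 {C : ℝ≥0} (hC : ∀ s, ‖f s‖ ≤ C)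
    (hu : ∀ t ≥ 0, u t = d + ∫ s in 0..t, f s) :
    LipschitzOnWith C u {t | 0 ≤ t ∧ IntervalIntegrable f volume 0 t} := by
  refine LipschitzOnWith.of_dist_le_mul fun t ht s hs => ?_
  rw [dist_eq, dist_eq, hu t ht.1, hu s hs.1, add_sub_add_left_eq_sub,
    integral_interval_sub_left ht.2 hs.2, ← norm_eq_abs]
  exact norm_integral_le_of_norm_le_const fun x _ => hC x

lemma intervalIntegrable_comp_of_eq_add_integral {φ : ℝ → ℝ} (hφ : Measurable φ) {C : ℝ≥0}
    (hC : ∀ x, ‖φ x‖ ≤ C) (hu : ∀ t ≥ 0, u t = d + ∫ s in 0..t, φ (u s)) {T : ℝ} (hT : 0 ≤ T) :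
    IntervalIntegrable (fun s => φ (u s)) volume 0 T := by
  set S := {t | 0 ≤ t ∧ IntervalIntegrable (fun s => φ (u s)) volume 0 t}
  have hS : S.OrdConnected := ⟨fun s hs t ht r hr =>
    ⟨hs.1.trans hr.1,
      ht.2.mono_set (uIcc_subset_uIcc_left (Icc_subset_uIcc ⟨hs.1.trans hr.1, hr.2⟩))⟩⟩
  have hu_off : ∀ t ∈ Ici 0 \ S, u t = d := fun t ht => by
    rw [hu t ht.1, integral_undef fun h => ht.2 ⟨ht.1, h⟩, add_zero]
  have hmeas : AEStronglyMeasurable u (volume.restrict (Ici 0)) := by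
    rw [← union_sdiff_cancel (show S ⊆ Ici 0 from fun t ht => ht.1),
      aestronglyMeasurable_union_iff]
    refine ⟨(lipschitzOnWith_of_eq_add_integral_s19 (fun s => hC (u s)) hu).continuousOn
      |>.aestronglyMeasurable hS.measurableSet, (aestronglyMeasurable_const (b := d)).congr ?_⟩
    filter_upwards [ae_restrict_mem (measurableSet_Ici.diff hS.measurableSet)] with t ht
    exact (hu_off t ht).symm
  rw [intervalIntegrable_iff_integrableOn_Ioc_of_le hT]
  refine Integrable.of_bound (C := C) ?_ (ae_of_all _ fun s => hC (u s))
  have hu_Ioc : AEStronglyMeasurable u (volume.restrict (Ioc 0 T)) :=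
    hmeas.mono_set (Ioc_subset_Ioi_self.trans Ioi_subset_Ici_self)
  exact (hφ.comp_aemeasurable hu_Ioc.aemeasurable).aestronglyMeasurable

lemma mapsTo_of_eq_add_integral {K : Set ℝ} (hK : IsClosed K) (hd : d ∈ K)
    (hcont : ContinuousOn u (Ici 0)) (hf : ∀ t ≥ 0, IntervalIntegrable f volume 0 t)
    (hu : ∀ t ≥ 0, u t = d + ∫ s in 0..t, f s)
    (hfK : ∀ s, u s ∉ K → f s = 0) : MapsTo u (Ici 0) K := by
  intro t ht
  by_contra hut
  set A := Icc 0 t ∩ u ⁻¹' K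
  have hA : IsClosed A :=
    (hcont.mono Icc_subset_Ici_self).preimage_isClosed_of_isClosed isClosed_Icc hK
  have h0A : (0 : ℝ) ∈ A := ⟨⟨le_rfl, ht⟩, by simpa [hu 0 le_rfl] using hd⟩
  have hAbdd : BddAbove A := ⟨t, fun s hs => hs.1.2⟩
  set m := sSup A
  have hmA : m ∈ A := hA.csSup_mem ⟨0, h0A⟩ hAbdd
  have hmt : m ≤ t := hmA.1.2
  have hf_zero : ∫ s in m..t, f s = 0 := by
    rw [← integral_zero (a := m) (b := t) (μ := volume)]
    refine integral_congr_ae (ae_of_all _ fun s hs => hfK s fun hsK => ?_)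
    rw [uIoc_of_le hmt] at hs
    exact (le_csSup hAbdd ⟨⟨hmA.1.1.trans hs.1.le, hs.2⟩, hsK⟩).not_gt hs.1
  have hum : u t = u m := by
    have := integral_interval_sub_left (hf t ht) (hf m hmA.1.1)
    rw [hf_zero] at this
    rw [hu t ht, hu m hmA.1.1]
    linarith
  exact hut (hum ▸ hmA.2)

lemma exp_mul_eq_add_integral (k d t : ℝ) :
    exp (k * t) * d = d + ∫ s in 0..t, k * (exp (k * s) * d) := by
  rw [integral_eq_sub_of_hasDerivAt (f := fun s => exp (k * s) * d) (fun x _ => ?_)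
    ((by fun_prop : Continuous fun s => k * (exp (k * s) * d)).intervalIntegrable _ _)]
  · simp
  · have h := ((hasDerivAt_id' x).const_mul k).exp.mul_const d
    rw [mul_one] at h
    rwa [mul_left_comm, ← mul_assoc]

lemma eq_exp_mul_of_eq_add_integral {k : ℝ} (hcont : ContinuousOn u (Ici 0))
    (hu : ∀ t ≥ 0, u t = d + ∫ s in 0..t, k * u s) {t : ℝ} (ht : 0 ≤ t) :
    u t = exp (k * t) * d := by
  -- a continuous extension of `u` to all of `ℝ`, so that the FTC for `Continuous` applies
  set v : ℝ → ℝ := fun s => u (max s 0)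
  have hv : Continuous v :=
    hcont.comp_continuous (continuous_id.max continuous_const) fun s => le_max_right s 0
  have hu_v : ∀ y ≥ 0, u y = d + ∫ s in 0..y, k * v s := fun y hy => by
    rw [hu y hy, integral_congr fun s hs => ?_]
    rw [uIcc_of_le hy] at hs
    simp [v, max_eq_left hs.1]
  have hu_deriv : ∀ x ≥ 0, HasDerivWithinAt u (k * u x) (Ici x) x := fun x hx => by
    have h := (((show Continuous fun s => k * v s by fun_prop).integral_hasStrictDerivAt 0
      x).hasDerivAt.const_add d).hasDerivWithinAt (s := Ici x)
    rw [show v x = u x by simp [v, hx]] at h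
    exact h.congr (fun y hy => hu_v y (hx.trans hy)) (hu_v x hx)
  have hexp : ∀ x, HasDerivAt (fun s => exp (-(k * s))) (exp (-(k * x)) * -k) x := fun x => by
    simpa using ((hasDerivAt_id' x).const_mul k).neg.exp
  have hconst := constant_of_has_deriv_right_zero (f := fun s => exp (-(k * s)) * u s)
    (a := 0) (b := t) ((by fun_prop : Continuous fun s => exp (-(k * s))).continuousOn.mul
      (hcont.mono Icc_subset_Ici_self)) (fun x hx => ?_) t ⟨ht, le_rfl⟩
  · have hu0 : u 0 = d := by simpa using hu 0 le_rfl
    simp only [mul_zero, neg_zero, exp_zero, one_mul, hu0] at hconst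
    rw [← hconst, ← mul_assoc, ← exp_add, add_neg_cancel, exp_zero, one_mul]
  · have h := (hexp x).hasDerivWithinAt.fun_mul (hu_deriv x hx.1)
    rwa [show exp (-(k * x)) * -k * u x + exp (-(k * x)) * (k * u x) = 0 by ring] at h

lemma eq_exp_of_eq_add_integral_truncated (hd : |d| ≤ 1)
    (hu : ∀ t ≥ 0, u t = d + ∫ s in 0..t, if |u s| ≤ 1 then -2 * u s else 0) {t : ℝ}
    (ht : 0 ≤ t) : u t = exp (-2 * t) * d := by
  set φ : ℝ → ℝ := fun r => if |r| ≤ 1 then -2 * r else 0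
  have hφ : Measurable φ :=
    Measurable.ite (measurableSet_le measurable_id.abs measurable_const) (by fun_prop)
      (by fun_prop)
  have hφC : ∀ r, ‖φ r‖ ≤ (2 : ℝ≥0) := fun r => by
    simp only [φ]
    split_ifs with hr
    · simpa [abs_mul] using mul_le_mul_of_nonneg_left hr zero_le_two
    · simp
  have hf := fun t (ht : 0 ≤ t) => intervalIntegrable_comp_of_eq_add_integral hφ hφC hu ht
  have hcont : ContinuousOn u (Ici 0) :=
    (lipschitzOnWith_of_eq_add_integral_s19 (fun s => hφC (u s)) hu).continuousOn.mono
      fun t ht => ⟨ht, hf t ht⟩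
  have hbound : MapsTo u (Ici 0) (Icc (-1) 1) :=
    mapsTo_of_eq_add_integral isClosed_Icc (abs_le.1 hd) hcont hf hu
      fun s hs => if_neg fun h => hs (abs_le.1 h)
  refine eq_exp_mul_of_eq_add_integral hcont (fun t ht => ?_) ht
  rw [hu t ht, integral_congr fun s hs => if_pos (abs_le.2 (hbound ?_))]
  rw [uIcc_of_le ht] at hs
  exact hs.1

end IntegralEquation

lemma integral_mul_sub_swap (w p q : ℝ → ℝ) (a b : ℝ) :
    ∫ s in a..b, w s * (p s - q s) = -∫ s in a..b, w s * (q s - p s) := by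
  rw [← intervalIntegral.integral_neg]
  congr with s
  ring

def IsCaratheodorySolution (x1 x2 : ℝ → ℝ) (a b : ℝ) : Prop :=
  x1 0 = a ∧ x2 0 = b ∧
    (∀ t ≥ (0:ℝ), x1 t = x1 0 + ∫ s in (0:ℝ)..t,
      (if |x1 s - x2 s| ≤ 1 then (1:ℝ) else 0) * (x2 s - x1 s)) ∧
    (∀ t ≥ (0:ℝ), x2 t = x2 0 + ∫ s in (0:ℝ)..t,
      (if |x1 s - x2 s| ≤ 1 then (1:ℝ) else 0) * (x1 s - x2 s))

namespace IsCaratheodorySolution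

variable {x1 x2 : ℝ → ℝ} {a b : ℝ}

lemma add_eq (hx : IsCaratheodorySolution x1 x2 a b) {t : ℝ} (ht : 0 ≤ t) :
    x1 t + x2 t = a + b := by
  obtain ⟨hx1, hx2, h1, h2⟩ := hx
  linarith [h1 t ht, h2 t ht,
    integral_mul_sub_swap (fun s => if |x1 s - x2 s| ≤ 1 then (1:ℝ) else 0) x1 x2 0 t]

lemma sub_eq_add_integral (hx : IsCaratheodorySolution x1 x2 a b) :
    ∀ t ≥ (0:ℝ), x1 t - x2 t = (a - b) + ∫ s in (0:ℝ)..t,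
      if |x1 s - x2 s| ≤ 1 then -2 * (x1 s - x2 s) else 0 := by
  intro t ht
  obtain ⟨hx1, hx2, h1, h2⟩ := hx
  have h_int : ∫ s in (0:ℝ)..t, (if |x1 s - x2 s| ≤ 1 then -2 * (x1 s - x2 s) else 0) =
      2 * ∫ s in (0:ℝ)..t, (if |x1 s - x2 s| ≤ 1 then (1:ℝ) else 0) * (x2 s - x1 s) := by
    rw [← intervalIntegral.integral_const_mul]
    congr with s
    split_ifs <;> ring
  linarith [h1 t ht, h2 t ht,
    integral_mul_sub_swap (fun s => if |x1 s - x2 s| ≤ 1 then (1:ℝ) else 0) x1 x2 0 t]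

end IsCaratheodorySolution

lemma isCaratheodorySolution_of_eq {a b : ℝ} (hab : |a - b| ≤ 1) {y1 y2 : ℝ → ℝ}
    (hy1 : ∀ t, y1 t = ((a + b) + exp (-2 * t) * (a - b)) / 2)
    (hy2 : ∀ t, y2 t = ((a + b) - exp (-2 * t) * (a - b)) / 2) :
    IsCaratheodorySolution y1 y2 a b := by
  have hy_sub : ∀ s, y1 s - y2 s = exp (-2 * s) * (a - b) := fun s => by rw [hy1, hy2]; ring
  have hy_int : ∀ t ≥ (0:ℝ), ∫ s in (0:ℝ)..t,
      (if |y1 s - y2 s| ≤ 1 then (1:ℝ) else 0) * (y1 s - y2 s) =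
      (a - b - exp (-2 * t) * (a - b)) / 2 := fun t ht => by
    rw [exp_mul_eq_add_integral (-2) (a - b) t, intervalIntegral.integral_const_mul,
      integral_congr (g := fun s => exp (-2 * s) * (a - b)) fun s hs => ?_]
    · ring
    rw [uIcc_of_le ht] at hs
    have hs_le : |y1 s - y2 s| ≤ 1 := by
      rw [hy_sub, abs_mul, abs_of_pos (exp_pos _)]
      exact mul_le_one₀ (exp_le_one_iff.2 (by linarith [hs.1])) (abs_nonneg _) hab
    rw [if_pos hs_le, one_mul, hy_sub]
  have hy1_zero : y1 0 = a := by simp [hy1]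
  have hy2_zero : y2 0 = b := by simp [hy2]
  refine ⟨hy1_zero, hy2_zero, fun t ht => ?_, fun t ht => ?_⟩
  · linarith [hy1 t, hy_int t ht,
      integral_mul_sub_swap (fun s => if |y1 s - y2 s| ≤ 1 then (1:ℝ) else 0) y1 y2 0 t]
  · linarith [hy2 t, hy_int t ht]

/-- For the variant two-agent 1D HK system with interaction active at distance exactly 1
(`a(r) = 1` for `r ≤ 1`, `0` for `r > 1`) and `|x₁₀ - x₂₀| = 1`, the function given by
`x₁ - x₂ = e^{-2t}(x₁₀ - x₂₀)`, `x₁ + x₂ = x₁₀ + x₂₀` is the unique Caratheodory solution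
(integral form): it solves the system, and every Caratheodory solution with this initial
condition satisfies these formulas. -/
theorem stmt_19 (a b : ℝ) (hab : |a - b| = 1) :
    (∀ y1 y2 : ℝ → ℝ,
      (∀ t, y1 t = ((a + b) + Real.exp (-2 * t) * (a - b)) / 2) →
      (∀ t, y2 t = ((a + b) - Real.exp (-2 * t) * (a - b)) / 2) →
      y1 0 = a ∧ y2 0 = b ∧
      (∀ t ≥ (0:ℝ), y1 t = y1 0 + ∫ s in (0:ℝ)..t,
        (if |y1 s - y2 s| ≤ 1 then (1:ℝ) else 0) * (y2 s - y1 s)) ∧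
      (∀ t ≥ (0:ℝ), y2 t = y2 0 + ∫ s in (0:ℝ)..t,
        (if |y1 s - y2 s| ≤ 1 then (1:ℝ) else 0) * (y1 s - y2 s))) ∧
    (∀ x1 x2 : ℝ → ℝ,
      x1 0 = a → x2 0 = b →
      (∀ t ≥ (0:ℝ), x1 t = x1 0 + ∫ s in (0:ℝ)..t,
        (if |x1 s - x2 s| ≤ 1 then (1:ℝ) else 0) * (x2 s - x1 s)) →
      (∀ t ≥ (0:ℝ), x2 t = x2 0 + ∫ s in (0:ℝ)..t,
        (if |x1 s - x2 s| ≤ 1 then (1:ℝ) else 0) * (x1 s - x2 s)) →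
      ∀ t ≥ (0:ℝ), x1 t - x2 t = Real.exp (-2 * t) * (a - b) ∧
        x1 t + x2 t = a + b) := by
  refine ⟨fun y1 y2 hy1 hy2 => isCaratheodorySolution_of_eq hab.le hy1 hy2,
    fun x1 x2 hx1 hx2 h1 h2 t ht => ?_⟩
  have hx : IsCaratheodorySolution x1 x2 a b := ⟨hx1, hx2, h1, h2⟩
  exact ⟨eq_exp_of_eq_add_integral_truncated hab.le hx.sub_eq_add_integral ht, hx.add_eq ht⟩
end
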